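/- arXiv:2603.02233 — 4 statements merged into one kernel-verified Lean document; each statement's English description precedes it below -/
import Mathlib

section
/- Let ω ∈ S_B and, for each agent k, let z_1^{(k)},…,z_{n_k}^{(k)} ∈ Z be data points, with empirical kernel mean embeddings μ̂_k = (1/n_k) Σ_{i=1}^{n_k} φ(z_i^{(k)}) and μ₁ = E_{Z∼P₁}[φ(Z)]. Let θ̂ ∈ Θ minimize the weighted empirical risk θ ↦ Σ_{k=1}^B ω_k (1/n_k) Σ_{i=1}^{n_k} ℓ_θ(z_i^{(k)}) over Θ, and let θ* ∈ Θ minimize the population risk R₁(θ) = E_{Z∼P₁}[ℓ_θ(Z)] over Θ. Then R₁(θ̂) − R₁(θ*) ≤ 2·R_Θ·‖Σ_{k=1}^B ω_k μ̂_k − μ₁‖_H. -/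
open MeasureTheory
open scoped RealInnerProductSpace BigOperators

/-- Excess-risk bound for the minimizer of the weighted empirical risk:
`R₁(θ̂) − R₁(θ*) ≤ 2 R_Θ ‖Σ_k ω_k μ̂_k − μ₁‖_H`. -/
theorem stmt_3
    {H : Type*} [NormedAddCommGroup H] [InnerProductSpace ℝ H] [CompleteSpace H]
    [MeasurableSpace H] [BorelSpace H] [SecondCountableTopology H]
    {Z : Type*} [MeasurableSpace Z]
    (φ : Z → H) (hφm : Measurable φ) (Mφ : ℝ) (hφb : ∀ z, ‖φ z‖ ≤ Mφ)
    (P₁ : Measure Z) [IsProbabilityMeasure P₁]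
    {Θ : Type*} (ℓ : Θ → Z → ℝ) (c : Θ → ℝ) (h : Θ → H)
    (hℓ : ∀ θ z, ℓ θ z = c θ + ⟪h θ, φ z⟫)
    (hbdd : BddAbove (Set.range fun θ => ‖h θ‖))
    (B : ℕ) (n : Fin B → ℕ) (hn : ∀ k, 0 < n k)
    (ω : Fin B → ℝ) (hω : ω ∈ stdSimplex ℝ (Fin B))
    (z : (k : Fin B) → Fin (n k) → Z)
    (θhat θstar : Θ)
    (hθhat : ∀ θ, (∑ k, ω k * ((n k : ℝ)⁻¹ * ∑ i, ℓ θhat (z k i)))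
        ≤ ∑ k, ω k * ((n k : ℝ)⁻¹ * ∑ i, ℓ θ (z k i)))
    (hθstar : ∀ θ, (∫ w, ℓ θstar w ∂P₁) ≤ ∫ w, ℓ θ w ∂P₁) :
    (∫ w, ℓ θhat w ∂P₁) - (∫ w, ℓ θstar w ∂P₁)
      ≤ 2 * (⨆ θ, ‖h θ‖) *
        ‖(∑ k, ω k • ((n k : ℝ)⁻¹ • ∑ i, φ (z k i))) - ∫ w, φ w ∂P₁‖ := by

  classical
  set μhat : H := ∑ k, ω k • ((n k : ℝ)⁻¹ • ∑ i, φ (z k i)) with hμhat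
  set μ1 : H := ∫ w, φ w ∂P₁ with hμ1
  have hφint : Integrable φ P₁ :=
    ⟨hφm.aestronglyMeasurable,
      MeasureTheory.HasFiniteIntegral.of_bounded (C := Mφ) (Filter.Eventually.of_forall hφb)⟩
  have hRint : ∀ θ, (∫ w, ℓ θ w ∂P₁) = c θ + ⟪h θ, μ1⟫ := by
    intro θ
    have : (∫ w, ℓ θ w ∂P₁) = ∫ w, (c θ + ⟪h θ, φ w⟫) ∂P₁ := by
      simp only [hℓ]
    rw [this, integral_add (integrable_const _) (hφint.const_inner _),
      integral_inner hφint, integral_const]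
    simp
    rfl
  have hRemp : ∀ θ, (∑ k, ω k * ((n k : ℝ)⁻¹ * ∑ i, ℓ θ (z k i))) = c θ + ⟪h θ, μhat⟫ := by
    intro θ
    have hk : ∀ k : Fin B, (n k : ℝ)⁻¹ * ∑ i, ℓ θ (z k i)
        = c θ + ⟪h θ, (n k : ℝ)⁻¹ • ∑ i, φ (z k i)⟫ := by
      intro k
      have hnk : (n k : ℝ) ≠ 0 := Nat.cast_ne_zero.mpr (hn k).ne'
      have : (∑ i, ℓ θ (z k i)) = (n k : ℝ) * c θ + ⟪h θ, ∑ i, φ (z k i)⟫ := by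
        simp only [hℓ, Finset.sum_add_distrib, Finset.sum_const, Finset.card_univ,
          Fintype.card_fin, nsmul_eq_mul, inner_sum]
      rw [this, mul_add, ← mul_assoc, inv_mul_cancel₀ hnk, one_mul,
        real_inner_smul_right]
    calc (∑ k, ω k * ((n k : ℝ)⁻¹ * ∑ i, ℓ θ (z k i)))
        = ∑ k, ω k * (c θ + ⟪h θ, (n k : ℝ)⁻¹ • ∑ i, φ (z k i)⟫) := by
          exact Finset.sum_congr rfl fun k _ => by rw [hk k]
      _ = (∑ k, ω k) * c θ + ⟪h θ, μhat⟫ := by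
          rw [hμhat, inner_sum, Finset.sum_mul, ← Finset.sum_add_distrib]
          refine Finset.sum_congr rfl fun k _ => ?_
          simp [real_inner_smul_right, mul_add, mul_assoc]
      _ = c θ + ⟪h θ, μhat⟫ := by rw [hω.2, one_mul]
  set R : ℝ := ⨆ θ, ‖h θ‖ with hR
  have hle : ∀ θ, ‖h θ‖ ≤ R := fun θ => le_ciSup hbdd θ
  have hinner : ∀ θ, ⟪h θ, μ1 - μhat⟫ ≤ R * ‖μhat - μ1‖ := by
    intro θ
    calc ⟪h θ, μ1 - μhat⟫ ≤ ‖h θ‖ * ‖μ1 - μhat‖ := real_inner_le_norm _ _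
      _ ≤ R * ‖μhat - μ1‖ := by
          rw [norm_sub_rev]
          exact mul_le_mul_of_nonneg_right (hle θ) (norm_nonneg _)
  have hinner' : ∀ θ, ⟪h θ, μhat - μ1⟫ ≤ R * ‖μhat - μ1‖ := by
    intro θ
    calc ⟪h θ, μhat - μ1⟫ ≤ ‖h θ‖ * ‖μhat - μ1‖ := real_inner_le_norm _ _
      _ ≤ R * ‖μhat - μ1‖ := mul_le_mul_of_nonneg_right (hle θ) (norm_nonneg _)
  have key := hθhat θstar
  rw [hRemp θhat, hRemp θstar] at key
  have h1 : (∫ w, ℓ θhat w ∂P₁) - (∫ w, ℓ θstar w ∂P₁)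
      = ⟪h θhat, μ1 - μhat⟫ + ((c θhat + ⟪h θhat, μhat⟫) - (c θstar + ⟪h θstar, μhat⟫))
        + ⟪h θstar, μhat - μ1⟫ := by
    rw [hRint θhat, hRint θstar, inner_sub_right, inner_sub_right]
    ring
  rw [h1]
  have := hinner θhat
  have := hinner' θstar
  linarith [hinner θhat, hinner' θstar, sub_nonpos.mpr key]
end

section
/- Fix ε ≥ 0 and R ≥ 0, and assume that for each θ ∈ Θ there exist c_θ ∈ ℝ and h_θ ∈ H with ‖h_θ‖_H ≤ R and sup_{z∈Z} |c_θ + ⟨h_θ, φ(z)⟩_H − ℓ_θ(z)| ≤ ε. Let ω ∈ S_B, let z_1^{(k)},…,z_{n_k}^{(k)} ∈ Z be data points for each agent k, with μ̂_k = (1/n_k) Σ_{i=1}^{n_k} φ(z_i^{(k)}) and μ₁ = E_{Z∼P₁}[φ(Z)]. If θ̂ ∈ Θ minimizes θ ↦ Σ_{k=1}^B ω_k (1/n_k) Σ_{i=1}^{n_k} ℓ_θ(z_i^{(k)}) over Θ and θ* ∈ Θ minimizes R₁(θ) = E_{Z∼P₁}[ℓ_θ(Z)] over Θ, then R₁(θ̂)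 − R₁(θ*) ≤ 2·R·‖Σ_{k=1}^B ω_k μ̂_k − μ₁‖_H + 4ε. -/
open MeasureTheory
open scoped RealInnerProductSpace BigOperators

/-- Excess-risk bound under an `ε`-approximate RKHS representation of the
losses: `R₁(θ̂) − R₁(θ*) ≤ 2 R ‖Σ_k ω_k μ̂_k − μ₁‖_H + 4 ε`. -/
theorem stmt_6
    {H : Type*} [NormedAddCommGroup H] [InnerProductSpace ℝ H] [CompleteSpace H]
    [MeasurableSpace H] [BorelSpace H] [SecondCountableTopology H]
    {Z : Type*} [MeasurableSpace Z]
    (φ : Z → H) (hφm : Measurable φ) (Mφ : ℝ) (hφb : ∀ z, ‖φ z‖ ≤ Mφ)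
    (P₁ : Measure Z) [IsProbabilityMeasure P₁]
    {Θ : Type*} (ℓ : Θ → Z → ℝ)
    (hℓm : ∀ θ, Measurable (ℓ θ)) (Mℓ : ℝ) (hℓb : ∀ θ z, |ℓ θ z| ≤ Mℓ)
    (ε R : ℝ) (hε : 0 ≤ ε) (hR : 0 ≤ R)
    (happrox : ∀ θ, ∃ (cθ : ℝ) (hθ : H), ‖hθ‖ ≤ R ∧
        ∀ z, |cθ + ⟪hθ, φ z⟫ - ℓ θ z| ≤ ε)
    (B : ℕ) (n : Fin B → ℕ) (hn : ∀ k, 0 < n k)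
    (ω : Fin B → ℝ) (hω : ω ∈ stdSimplex ℝ (Fin B))
    (z : (k : Fin B) → Fin (n k) → Z)
    (θhat θstar : Θ)
    (hθhat : ∀ θ, (∑ k, ω k * ((n k : ℝ)⁻¹ * ∑ i, ℓ θhat (z k i)))
        ≤ ∑ k, ω k * ((n k : ℝ)⁻¹ * ∑ i, ℓ θ (z k i)))
    (hθstar : ∀ θ, (∫ w, ℓ θstar w ∂P₁) ≤ ∫ w, ℓ θ w ∂P₁) :
    (∫ w, ℓ θhat w ∂P₁) - (∫ w, ℓ θstar w ∂P₁)
      ≤ 2 * R * ‖(∑ k, ω k • ((n k : ℝ)⁻¹ • ∑ i, φ (z k i))) - ∫ w, φ w ∂P₁‖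
        + 4 * ε := by
  classical
  set μhat := ∑ k, ω k • ((n k : ℝ)⁻¹ • ∑ i, φ (z k i)) with hμhat
  set μ₁ := ∫ w, φ w ∂P₁ with hμ₁def
  set L : Θ → ℝ := fun θ => ∑ k, ω k * ((n k : ℝ)⁻¹ * ∑ i, ℓ θ (z k i)) with hLdef
  have hφint : Integrable φ P₁ :=
    ⟨hφm.aestronglyMeasurable,
      (HasFiniteIntegral.of_bounded (C := Mφ) (ae_of_all _ fun w => hφb w))⟩
  have hωnn := hω.1
  have hωsum : ∑ k, ω k = 1 := hω.2
  have key : ∀ θ, |(∫ w, ℓ θ w ∂P₁) - L θ| ≤ R * ‖μhat - μ₁‖ + 2 * ε := by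
    intro θ
    obtain ⟨c, h, hhR, hcb⟩ := happrox θ
    have hℓint : Integrable (ℓ θ) P₁ :=
      ⟨(hℓm θ).aestronglyMeasurable,
        HasFiniteIntegral.of_bounded (C := Mℓ)
          (ae_of_all _ fun w => by simpa [Real.norm_eq_abs] using hℓb θ w)⟩
    have hinner_int : Integrable (fun w => ⟪h, φ w⟫) P₁ := hφint.const_inner h
    have hA : ∫ w, (c + ⟪h, φ w⟫) ∂P₁ = c + ⟪h, μ₁⟫ := by
      rw [integral_add (integrable_const c) hinner_int, integral_const, probReal_univ,
        one_smul, integral_inner hφint]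
    have hg : Integrable (fun w => c + ⟪h, φ w⟫) P₁ := (integrable_const c).add hinner_int
    have h1 : |(∫ w, ℓ θ w ∂P₁) - (c + ⟪h, μ₁⟫)| ≤ ε := by
      rw [← hA, ← integral_sub hℓint hg]
      calc |∫ w, (ℓ θ w - (c + ⟪h, φ w⟫)) ∂P₁|
          ≤ ε * (P₁ Set.univ).toReal := by
            rw [← Real.norm_eq_abs]
            apply norm_integral_le_of_norm_le_const
            exact ae_of_all _ fun w => by
              rw [Real.norm_eq_abs, abs_sub_comm]; exact hcb w
        _ = ε := by simp
    have hinner_emp : ⟪h, μhat⟫ = ∑ k, ω k * ((n k : ℝ)⁻¹ * ∑ i, ⟪h, φ (z k i)⟫) := by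
      simp [hμhat, inner_sum, real_inner_smul_right]
    have hX : c + ⟪h, μhat⟫
        = ∑ k, ω k * ((n k : ℝ)⁻¹ * ∑ i, (c + ⟪h, φ (z k i)⟫)) := by
      have step : ∀ k : Fin B,
          ω k * ((n k : ℝ)⁻¹ * ∑ i : Fin (n k), (c + ⟪h, φ (z k i)⟫))
            = ω k * c + ω k * ((n k : ℝ)⁻¹ * ∑ i, ⟪h, φ (z k i)⟫) := by
        intro k
        have hnk : ((n k : ℝ))⁻¹ * (n k : ℝ) = 1 :=
          inv_mul_cancel₀ (by exact_mod_cast (hn k).ne')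
        rw [Finset.sum_add_distrib, Finset.sum_const, Finset.card_univ, Fintype.card_fin,
          nsmul_eq_mul, mul_add, mul_add, ← mul_assoc ((n k : ℝ))⁻¹, hnk, one_mul]
      rw [Finset.sum_congr rfl fun k _ => step k, Finset.sum_add_distrib,
        ← Finset.sum_mul, hωsum, one_mul, hinner_emp]
    have h2 : |L θ - (c + ⟪h, μhat⟫)| ≤ ε := by
      rw [hX, hLdef]
      have hdiff : (∑ k, ω k * ((n k : ℝ)⁻¹ * ∑ i, ℓ θ (z k i)))
          - (∑ k, ω k * ((n k : ℝ)⁻¹ * ∑ i, (c + ⟪h, φ (z k i)⟫)))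
          = ∑ k, ω k * ((n k : ℝ)⁻¹ * ∑ i, (ℓ θ (z k i) - (c + ⟪h, φ (z k i)⟫))) := by
        rw [← Finset.sum_sub_distrib]
        refine Finset.sum_congr rfl fun k _ => ?_
        rw [← mul_sub, ← mul_sub, ← Finset.sum_sub_distrib]
      rw [hdiff]
      calc |∑ k, ω k * ((n k : ℝ)⁻¹ * ∑ i, (ℓ θ (z k i) - (c + ⟪h, φ (z k i)⟫)))|
          ≤ ∑ k, |ω k * ((n k : ℝ)⁻¹ * ∑ i, (ℓ θ (z k i) - (c + ⟪h, φ (z k i)⟫)))| :=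
            Finset.abs_sum_le_sum_abs _ _
        _ ≤ ∑ k, ω k * ε := by
            refine Finset.sum_le_sum fun k _ => ?_
            have hnk0 : (0:ℝ) < (n k : ℝ) := by exact_mod_cast hn k
            have hb : |(n k : ℝ)⁻¹ * ∑ i, (ℓ θ (z k i) - (c + ⟪h, φ (z k i)⟫))| ≤ ε := by
              rw [abs_mul, abs_of_nonneg (inv_nonneg.2 hnk0.le)]
              calc (n k : ℝ)⁻¹ * |∑ i, (ℓ θ (z k i) - (c + ⟪h, φ (z k i)⟫))|
                  ≤ (n k : ℝ)⁻¹ * ∑ i : Fin (n k), ε := by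
                    refine mul_le_mul_of_nonneg_left ?_ (inv_nonneg.2 hnk0.le)
                    refine (Finset.abs_sum_le_sum_abs _ _).trans
                      (Finset.sum_le_sum fun i _ => ?_)
                    rw [abs_sub_comm]; exact hcb (z k i)
                _ = ε := by
                    rw [Finset.sum_const, Finset.card_univ, Fintype.card_fin, nsmul_eq_mul,
                      ← mul_assoc, inv_mul_cancel₀ hnk0.ne', one_mul]
            rw [abs_mul, abs_of_nonneg (hωnn k)]
            exact mul_le_mul_of_nonneg_left hb (hωnn k)
        _ = ε := by rw [← Finset.sum_mul, hωsum, one_mul]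
    have h3 : |(c + ⟪h, μ₁⟫) - (c + ⟪h, μhat⟫)| ≤ R * ‖μhat - μ₁‖ := by
      have : (c + ⟪h, μ₁⟫) - (c + ⟪h, μhat⟫) = ⟪h, μ₁ - μhat⟫ := by
        rw [inner_sub_right]; ring
      rw [this]
      calc |⟪h, μ₁ - μhat⟫| ≤ ‖h‖ * ‖μ₁ - μhat‖ := abs_real_inner_le_norm h _
        _ ≤ R * ‖μhat - μ₁‖ := by
            rw [norm_sub_rev]
            exact mul_le_mul_of_nonneg_right hhR (norm_nonneg _)
    have t1 := abs_sub_le (∫ w, ℓ θ w ∂P₁) (c + ⟪h, μ₁⟫) (c + ⟪h, μhat⟫)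
    have t2 := abs_sub_le (∫ w, ℓ θ w ∂P₁) (c + ⟪h, μhat⟫) (L θ)
    have h2' : |(c + ⟪h, μhat⟫) - L θ| ≤ ε := by rwa [abs_sub_comm]
    linarith
  have k1 := abs_le.mp (key θhat)
  have k2 := abs_le.mp (key θstar)
  have hLle : L θhat ≤ L θstar := hθhat θstar
  linarith [k1.1, k1.2, k2.1, k2.2]
end

section
/- There exists a constant C > 0, depending only on the uniform bound M of the feature function φ, such that for any two probability measures P, Q on Z, any D ∈ ℕ, and any δ ∈ (0,1), with probability at least 1 − δ over the i.i.d. draw Γ = (γ_1,…,γ_D) ∼ p^{⊗D}: √(MMD²_κ(P,Q)) ≤ √( (1/D) Σ_{s=1}^D ( E_{X∼P}[φ(γ_s,X)] − E_{Y∼Q}[φ(γ_s,Y)] )² ) + C·√( log(1/δ) / D ). -/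
open MeasureTheory
open scoped BigOperators

/-- The kernel induced by a random feature function: `κ(z,z') = E_{γ∼p}[φ(γ,z) φ(γ,z')]`. -/
noncomputable def rffKernel {Γ₀ Z : Type*} [MeasurableSpace Γ₀]
    (p : MeasureTheory.Measure Γ₀) (φ : Γ₀ → Z → ℝ) (z z' : Z) : ℝ :=
  ∫ γ, φ γ z * φ γ z' ∂p

/-- The squared MMD between `P` and `Q` for the kernel induced by the random features. -/
noncomputable def mmdSq {Γ₀ Z : Type*} [MeasurableSpace Γ₀] [MeasurableSpace Z]
    (p : MeasureTheory.Measure Γ₀) (φ : Γ₀ → Z → ℝ)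
    (P Q : MeasureTheory.Measure Z) : ℝ :=
  (∫ x, ∫ x', rffKernel p φ x x' ∂P ∂P) - 2 * (∫ x, ∫ y, rffKernel p φ x y ∂Q ∂P)
    + ∫ y, ∫ y', rffKernel p φ y y' ∂Q ∂Q

-- pointwise exp bound
lemma exp_neg_le {x : ℝ} (hx : 0 ≤ x) : Real.exp (-x) ≤ 1 - x + x ^ 2 / 2 := by
  have h1 : (1 : ℝ) + x + x ^ 2 / 2 ≤ Real.exp x := Real.quadratic_le_exp_of_nonneg hx
  have h2 : (0:ℝ) < 1 + x + x ^ 2 / 2 := by positivity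
  rw [Real.exp_neg]
  rw [inv_le_iff_one_le_mul₀ (Real.exp_pos x)]
  have h3 : (0:ℝ) < 1 - x + x ^ 2 / 2 := by nlinarith [sq_nonneg (x - 1)]
  nlinarith [mul_le_mul_of_nonneg_left h1 h3.le, sq_nonneg (x * x)]

-- integrable of bounded measurable
lemma integrable_of_bdd {α : Type*} [MeasurableSpace α] {μ : Measure α} [IsFiniteMeasure μ]
    {h : α → ℝ} {c : ℝ} (hm : AEStronglyMeasurable h μ) (hb : ∀ x, |h x| ≤ c) :
    Integrable h μ :=
  (integrable_const c).mono' hm (Filter.Eventually.of_forall fun x => by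
    simpa [Real.norm_eq_abs] using hb x)

-- product integral over pi measure
lemma pi_integral_pow {E : Type*} [MeasurableSpace E] (μ : Measure E) [IsProbabilityMeasure μ]
    (D : ℕ) (f : E → ℝ) :
    ∫ x : Fin D → E, ∏ i, f (x i) ∂(Measure.pi fun _ => μ) = (∫ x, f x ∂μ) ^ D := by
  letI : MeasureSpace E := ⟨μ⟩
  simpa using MeasureTheory.integral_fintype_prod_eq_pow (𝕜 := ℝ) (ι := Fin D) f (μ := μ)

section fubini
variable {Γ₀ Z : Type*} [MeasurableSpace Γ₀] [MeasurableSpace Z]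
  {p : Measure Γ₀} [IsProbabilityMeasure p] {φ : Γ₀ → Z → ℝ} {M : ℝ}

lemma meas_intP (hφ : Measurable (Function.uncurry φ)) (P : Measure Z) [IsProbabilityMeasure P] :
    StronglyMeasurable fun γ => ∫ x, φ γ x ∂P :=
  hφ.stronglyMeasurable.integral_prod_right'

lemma abs_intP_le (hb : ∀ γ z, |φ γ z| ≤ M)
    (P : Measure Z) [IsProbabilityMeasure P] (γ : Γ₀) : |∫ x, φ γ x ∂P| ≤ M := by
  have := norm_integral_le_of_norm_le_const (μ := P) (f := φ γ) (C := M)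
    (Filter.Eventually.of_forall fun z => by simpa [Real.norm_eq_abs] using hb γ z)
  simpa [Real.norm_eq_abs] using this

lemma swap_int (hM : 0 ≤ M) (hφ : Measurable (Function.uncurry φ)) (hb : ∀ γ z, |φ γ z| ≤ M)
    (P1 P2 : Measure Z) [IsProbabilityMeasure P1] [IsProbabilityMeasure P2] :
    ∫ x, ∫ y, (∫ γ, φ γ x * φ γ y ∂p) ∂P2 ∂P1
      = ∫ γ, (∫ x, φ γ x ∂P1) * (∫ y, φ γ y ∂P2) ∂p := by
  have m1 : Measurable fun q : Z × Γ₀ => φ q.2 q.1 := hφ.comp measurable_swap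
  have hswap1 : ∀ x : Z, ∫ y, ∫ γ, φ γ x * φ γ y ∂p ∂P2
      = ∫ γ, φ γ x * (∫ y, φ γ y ∂P2) ∂p := by
    intro x
    rw [integral_integral_swap]
    · simp_rw [integral_const_mul]
    · apply integrable_of_bdd (c := M * M)
      · exact (((hφ.comp (measurable_snd.prodMk measurable_const)).mul m1)).aestronglyMeasurable
      · intro q
        simp only [Function.uncurry]
        rw [abs_mul]
        exact mul_le_mul (hb _ _) (hb _ _) (abs_nonneg _) hM
  simp_rw [hswap1]
  rw [integral_integral_swap]
  · simp_rw [integral_mul_const]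
  · apply integrable_of_bdd (c := M * M)
    · exact (m1.mul ((meas_intP hφ P2).measurable.comp measurable_snd)).aestronglyMeasurable
    · intro q
      simp only [Function.uncurry]
      rw [abs_mul]
      exact mul_le_mul (hb _ _) (abs_intP_le hb P2 _) (abs_nonneg _) hM

lemma mmd_eq (hM : 0 ≤ M) (hφ : Measurable (Function.uncurry φ)) (hb : ∀ γ z, |φ γ z| ≤ M)
    (P Q : Measure Z) [IsProbabilityMeasure P] [IsProbabilityMeasure Q] :
    mmdSq p φ P Q = ∫ γ, ((∫ x, φ γ x ∂P) - ∫ y, φ γ y ∂Q) ^ 2 ∂p := by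
  set A : Γ₀ → ℝ := fun γ => ∫ x, φ γ x ∂P with hA
  set B : Γ₀ → ℝ := fun γ => ∫ y, φ γ y ∂Q with hB
  have mA := (meas_intP hφ P).measurable
  have mB := (meas_intP hφ Q).measurable
  have hbd : ∀ (u v : Γ₀ → ℝ), Measurable u → Measurable v →
      (∀ γ, |u γ| ≤ M) → (∀ γ, |v γ| ≤ M) → Integrable (fun γ => u γ * v γ) p := by
    intro u v hu hv hbu hbv
    apply integrable_of_bdd (c := M * M) (hu.mul hv).aestronglyMeasurable
    intro γ; rw [Pi.mul_apply, abs_mul]; exact mul_le_mul (hbu _) (hbv _) (abs_nonneg _) hM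
  have iAA := hbd A A mA mA (abs_intP_le hb P) (abs_intP_le hb P)
  have iAB := hbd A B mA mB (abs_intP_le hb P) (abs_intP_le hb Q)
  have iBB := hbd B B mB mB (abs_intP_le hb Q) (abs_intP_le hb Q)
  have key : ∀ γ, (A γ - B γ) ^ 2 = A γ * A γ - 2 * (A γ * B γ) + B γ * B γ := by
    intro γ; ring
  unfold mmdSq rffKernel
  rw [swap_int hM hφ hb P P, swap_int hM hφ hb P Q, swap_int hM hφ hb Q Q]
  simp only [hA, hB] at key
  simp_rw [key]
  have iSub : Integrable (fun γ => A γ * A γ - 2 * (A γ * B γ)) p :=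
    iAA.sub (iAB.const_mul 2)
  rw [integral_add iSub iBB, integral_sub iAA (iAB.const_mul 2), integral_const_mul]

end fubini

universe u v

set_option maxHeartbeats 1000000 in
/-- There is a constant `C > 0` depending only on the uniform bound `M`
of the feature function such that for all `P, Q, D, δ`, with probability at least `1 − δ`
over the i.i.d. draw `Γ = (γ₁,…,γ_D) ∼ p^{⊗D}`, the MMD is bounded by the random-feature
MMD estimate plus `C √(log(1/δ)/D)`. -/
theorem stmt_10 (M : ℝ) (hM : 0 < M) :
    ∃ C : ℝ, 0 < C ∧
      ∀ (Γ₀ : Type u) [MeasurableSpace Γ₀] (p : Measure Γ₀),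
        IsProbabilityMeasure p →
      ∀ (Z : Type v) [MeasurableSpace Z] (φ : Γ₀ → Z → ℝ),
        Measurable (Function.uncurry φ) → (∀ γ z, |φ γ z| ≤ M) →
      ∀ (P Q : Measure Z), IsProbabilityMeasure P → IsProbabilityMeasure Q →
      ∀ D : ℕ, 0 < D → ∀ δ : ℝ, 0 < δ → δ < 1 →
        ENNReal.ofReal (1 - δ) ≤
          (Measure.pi fun _ : Fin D => p)
            {Γ : Fin D → Γ₀ |
              Real.sqrt (mmdSq p φ P Q) ≤
                Real.sqrt ((D : ℝ)⁻¹ *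
                  ∑ s, ((∫ x, φ (Γ s) x ∂P) - ∫ y, φ (Γ s) y ∂Q) ^ 2)
                + C * Real.sqrt (Real.log (1 / δ) / D)} := by
  refine ⟨3 * M, by positivity, ?_⟩
  intro Γ₀ _ p hp Z _ φ hφ hb P Q hP hQ D hD δ hδ0 hδ1
  haveI := hp; haveI := hP; haveI := hQ
  set f : Γ₀ → ℝ := fun γ => ((∫ x, φ γ x ∂P) - ∫ y, φ γ y ∂Q) ^ 2 with hf
  have hmmd : mmdSq p φ P Q = ∫ γ, f γ ∂p := mmd_eq hM.le hφ hb P Q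
  set μ0 : ℝ := ∫ γ, f γ ∂p with hμ0
  have mf : Measurable f :=
    ((meas_intP hφ P).measurable.sub (meas_intP hφ Q).measurable).pow_const 2
  have hf_nonneg : ∀ γ, 0 ≤ f γ := fun γ => sq_nonneg _
  have hfb : ∀ γ, f γ ≤ 4 * M ^ 2 := by
    intro γ
    have h1 := abs_le.mp (abs_intP_le hb P γ)
    have h2 := abs_le.mp (abs_intP_le hb Q γ)
    simp only [hf]
    nlinarith [h1.1, h1.2, h2.1, h2.2]
  have hμ0_nonneg : 0 ≤ μ0 := integral_nonneg hf_nonneg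
  have i_f : Integrable f p := integrable_of_bdd mf.aestronglyMeasurable
    (fun γ => by rw [abs_of_nonneg (hf_nonneg γ)]; exact hfb γ)
  clear_value f μ0
  have hL : 0 < Real.log (1 / δ) := Real.log_pos (by rw [lt_div_iff₀ hδ0]; linarith)
  set L : ℝ := Real.log (1 / δ) with hLdef
  have hDpos : (0:ℝ) < D := Nat.cast_pos.mpr hD
  set t : ℝ := 3 * M * Real.sqrt (L / D) with htdef
  have ht : 0 < t := by
    have : 0 < Real.sqrt (L / D) := Real.sqrt_pos.mpr (by positivity)
    positivity
  have ht2 : t ^ 2 = 9 * M ^ 2 * (L / D) := by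
    rw [htdef, mul_pow, mul_pow, Real.sq_sqrt (by positivity : (0:ℝ) ≤ L / D)]
    ring
  by_cases hcase : Real.sqrt μ0 ≤ t
  · -- trivial case: the event is everything
    have huniv : {Γ : Fin D → Γ₀ |
        Real.sqrt (mmdSq p φ P Q) ≤
          Real.sqrt ((D : ℝ)⁻¹ *
            ∑ s, ((∫ x, φ (Γ s) x ∂P) - ∫ y, φ (Γ s) y ∂Q) ^ 2)
          + t} = Set.univ := by
      apply Set.eq_univ_of_forall
      intro Γ
      simp only [Set.mem_setOf_eq]
      rw [hmmd]
      have := Real.sqrt_nonneg ((D : ℝ)⁻¹ *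
        ∑ s, ((∫ x, φ (Γ s) x ∂P) - ∫ y, φ (Γ s) y ∂Q) ^ 2)
      calc Real.sqrt μ0 ≤ t := hcase
        _ ≤ _ := by linarith
    rw [huniv]
    simp only [measure_univ]
    exact ENNReal.ofReal_le_one.mpr (by linarith)
  · push_neg at hcase
    have hμ0_pos : 0 < μ0 := by
      by_contra h
      push_neg at h
      have : μ0 = 0 := le_antisymm h hμ0_nonneg
      rw [this, Real.sqrt_zero] at hcase
      linarith
    set r : ℝ := Real.sqrt μ0 - t with hrdef
    have hr : 0 < r := by simp [hrdef]; linarith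
    set a : ℝ := r ^ 2 with hadef
    set ε : ℝ := μ0 - a with hεdef
    have hsq : Real.sqrt μ0 ^ 2 = μ0 := Real.sq_sqrt hμ0_nonneg
    have hε_ge : t * Real.sqrt μ0 ≤ ε := by
      rw [hεdef, hadef, hrdef]
      nlinarith [Real.sqrt_nonneg μ0]
    have hεpos : 0 < ε := lt_of_lt_of_le (by positivity) hε_ge
    set B0 : ℝ := 4 * M ^ 2 with hB0def
    have hB0 : 0 < B0 := by positivity
    set lam : ℝ := ε / (B0 * μ0) with hlamdef
    have hlam : 0 < lam := by positivity
    have hεsq : t ^ 2 * μ0 ≤ ε ^ 2 := by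
      have h := mul_le_mul hε_ge hε_ge (by positivity) hεpos.le
      nlinarith [hsq]
    clear_value L t r a ε B0 lam
    set S : (Fin D → Γ₀) → ℝ := fun Γ => ∑ s, f (Γ s) with hSdef
    have mS : Measurable S := Finset.measurable_sum _ (fun s _ => mf.comp (measurable_pi_apply s))
    have hS_nonneg : ∀ Γ, 0 ≤ S Γ := fun Γ => Finset.sum_nonneg fun s _ => hf_nonneg _
    clear_value S
    set G : Set (Fin D → Γ₀) := {Γ | (D:ℝ) * a ≤ S Γ} with hGdef
    have hGmeas : MeasurableSet G := measurableSet_le measurable_const mS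
    clear_value G
    have hGsub : G ⊆ {Γ : Fin D → Γ₀ |
        Real.sqrt (mmdSq p φ P Q) ≤
          Real.sqrt ((D : ℝ)⁻¹ *
            ∑ s, ((∫ x, φ (Γ s) x ∂P) - ∫ y, φ (Γ s) y ∂Q) ^ 2)
          + t} := by
      intro Γ hΓ
      simp only [hGdef, Set.mem_setOf_eq] at hΓ
      simp only [Set.mem_setOf_eq]
      rw [hmmd]
      have hsum : ∑ s, ((∫ x, φ (Γ s) x ∂P) - ∫ y, φ (Γ s) y ∂Q) ^ 2 = S Γ := by
        rw [hSdef]; simp only [hf]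
      rw [hsum]
      have ha_le : a ≤ (D:ℝ)⁻¹ * S Γ := by
        rw [inv_mul_eq_div, le_div_iff₀ hDpos]
        linarith [hΓ]
      have hr_le : r ≤ Real.sqrt ((D:ℝ)⁻¹ * S Γ) := by
        rw [show r = Real.sqrt (r ^ 2) from (Real.sqrt_sq hr.le).symm]
        exact Real.sqrt_le_sqrt (by rw [← hadef]; exact ha_le)
      have : Real.sqrt μ0 = r + t := by rw [hrdef]; ring
      rw [this]
      linarith
    -- Chernoff bound
    set W : (Fin D → Γ₀) → ℝ := fun Γ => Real.exp (lam * ((D:ℝ) * a - S Γ)) with hWdef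
    have mW : Measurable W := (measurable_const.mul (measurable_const.sub mS)).exp
    have hW_nonneg : ∀ Γ, 0 ≤ W Γ := fun Γ => (Real.exp_pos _).le
    have iW : Integrable W (Measure.pi fun _ : Fin D => p) := by
      apply integrable_of_bdd (c := Real.exp (lam * ((D:ℝ) * a))) mW.aestronglyMeasurable
      intro Γ
      rw [abs_of_nonneg (hW_nonneg Γ)]
      show Real.exp (lam * ((D:ℝ) * a - S Γ)) ≤ _
      apply Real.exp_le_exp.mpr
      have := hS_nonneg Γ
      nlinarith
    clear_value W
    -- single-sample mgf bound
    set I1 : ℝ := ∫ γ, Real.exp (-lam * f γ) ∂p with hI1def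
    clear_value I1
    have i_exp : Integrable (fun γ => Real.exp (-lam * f γ)) p := by
      apply integrable_of_bdd (c := 1) (((measurable_const.mul mf).exp).aestronglyMeasurable)
      intro γ
      rw [abs_of_nonneg (Real.exp_pos _).le]
      rw [show (1:ℝ) = Real.exp 0 from Real.exp_zero.symm]
      apply Real.exp_le_exp.mpr
      have := hf_nonneg γ
      show -lam * f γ ≤ 0
      nlinarith
    have i_f2 : Integrable (fun γ => f γ ^ 2) p := by
      apply integrable_of_bdd (c := (4 * M ^ 2) ^ 2) (mf.pow_const 2).aestronglyMeasurable
      intro γ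
      rw [abs_of_nonneg (sq_nonneg _), ← hB0def]
      exact pow_le_pow_left₀ (hf_nonneg γ) (hfb γ) 2
    have i_poly : Integrable (fun γ => 1 - lam * f γ + lam ^ 2 / 2 * f γ ^ 2) p :=
      ((integrable_const 1).sub (i_f.const_mul lam)).add (i_f2.const_mul (lam ^ 2 / 2))
    have hI1_le : I1 ≤ Real.exp (-lam * μ0 + lam ^ 2 * B0 * μ0 / 2) := by
      have step1 : I1 ≤ ∫ γ, (1 - lam * f γ + lam ^ 2 / 2 * f γ ^ 2) ∂p := by
        rw [hI1def]
        apply integral_mono i_exp i_poly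
        intro γ
        show Real.exp (-lam * f γ) ≤ 1 - lam * f γ + lam ^ 2 / 2 * f γ ^ 2
        have hx : 0 ≤ lam * f γ := mul_nonneg hlam.le (hf_nonneg γ)
        have := exp_neg_le hx
        calc Real.exp (-lam * f γ) = Real.exp (-(lam * f γ)) := by rw [neg_mul]
          _ ≤ 1 - lam * f γ + (lam * f γ) ^ 2 / 2 := this
          _ = 1 - lam * f γ + lam ^ 2 / 2 * f γ ^ 2 := by ring
      have hf2_le : ∫ γ, f γ ^ 2 ∂p ≤ B0 * μ0 := by
        rw [hμ0, ← integral_const_mul]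
        apply integral_mono i_f2 (i_f.const_mul B0)
        intro γ
        show f γ ^ 2 ≤ B0 * f γ
        nlinarith [hf_nonneg γ, hfb γ]
      have step2 : ∫ γ, (1 - lam * f γ + lam ^ 2 / 2 * f γ ^ 2) ∂p
          = 1 - lam * μ0 + lam ^ 2 / 2 * ∫ γ, f γ ^ 2 ∂p := by
        have iSub : Integrable (fun γ => 1 - lam * f γ) p :=
          (integrable_const 1).sub (i_f.const_mul lam)
        rw [integral_add iSub (i_f2.const_mul (lam ^ 2 / 2)),
          integral_sub (integrable_const 1) (i_f.const_mul lam),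
          integral_const_mul, integral_const_mul, integral_const]
        simp [hμ0]
      calc I1 ≤ 1 - lam * μ0 + lam ^ 2 / 2 * ∫ γ, f γ ^ 2 ∂p := by rw [← step2]; exact step1
        _ ≤ 1 + (-lam * μ0 + lam ^ 2 * B0 * μ0 / 2) := by nlinarith [sq_nonneg lam]
        _ ≤ Real.exp (-lam * μ0 + lam ^ 2 * B0 * μ0 / 2) := by
            have := Real.add_one_le_exp (-lam * μ0 + lam ^ 2 * B0 * μ0 / 2)
            linarith
    have hI1_nonneg : 0 ≤ I1 := by
      rw [hI1def]; exact integral_nonneg fun γ => (Real.exp_pos _).le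
    -- total integral of W
    have hintW : ∫ Γ, W Γ ∂(Measure.pi fun _ : Fin D => p)
        = Real.exp (lam * ((D:ℝ) * a)) * I1 ^ D := by
      have hsum : ∀ Γ : Fin D → Γ₀, ∑ s : Fin D, -lam * f (Γ s) = -lam * S Γ := by
        intro Γ
        rw [hSdef]
        exact (Finset.mul_sum _ _ _).symm
      have hWeq : ∀ Γ : Fin D → Γ₀, W Γ
          = Real.exp (lam * ((D:ℝ) * a)) * ∏ s, Real.exp (-lam * f (Γ s)) := by
        intro Γ
        calc W Γ = Real.exp (lam * ((D:ℝ) * a - S Γ)) := by rw [hWdef]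
          _ = Real.exp (lam * ((D:ℝ) * a) + ∑ s : Fin D, -lam * f (Γ s)) := by
              rw [hsum Γ]; congr 1; ring
          _ = Real.exp (lam * ((D:ℝ) * a)) * Real.exp (∑ s : Fin D, -lam * f (Γ s)) :=
              Real.exp_add _ _
          _ = Real.exp (lam * ((D:ℝ) * a)) * ∏ s, Real.exp (-lam * f (Γ s)) := by
              rw [Real.exp_sum]
      rw [integral_congr_ae (Filter.Eventually.of_forall hWeq), integral_const_mul,
        pi_integral_pow p D (fun γ => Real.exp (-lam * f γ)), hI1def]
    have hexp_bound : ∫ Γ, W Γ ∂(Measure.pi fun _ : Fin D => p) ≤ δ := by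
      rw [hintW]
      have h1 : I1 ^ D ≤ Real.exp ((D:ℝ) * (-lam * μ0 + lam ^ 2 * B0 * μ0 / 2)) := by
        rw [show ((D:ℝ) * (-lam * μ0 + lam ^ 2 * B0 * μ0 / 2))
            = (D : ℕ) * (-lam * μ0 + lam ^ 2 * B0 * μ0 / 2) from by norm_num,
          Real.exp_nat_mul]
        exact pow_le_pow_left₀ hI1_nonneg hI1_le D
      have h2 : Real.exp (lam * ((D:ℝ) * a)) * I1 ^ D
          ≤ Real.exp (lam * ((D:ℝ) * a) + (D:ℝ) * (-lam * μ0 + lam ^ 2 * B0 * μ0 / 2)) := by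
        rw [Real.exp_add]
        exact mul_le_mul_of_nonneg_left h1 (Real.exp_pos _).le
      have h3 : lam * ((D:ℝ) * a) + (D:ℝ) * (-lam * μ0 + lam ^ 2 * B0 * μ0 / 2)
          = (D:ℝ) * (-lam * ε + lam ^ 2 * B0 * μ0 / 2) := by
        rw [hεdef]; ring
      have h4 : -lam * ε + lam ^ 2 * B0 * μ0 / 2 = -ε ^ 2 / (2 * B0 * μ0) := by
        rw [hlamdef]
        field_simp
        ring
      have h5 : (D:ℝ) * (-ε ^ 2 / (2 * B0 * μ0)) ≤ -L := by
        have hDt : (D:ℝ) * t ^ 2 = 9 * M ^ 2 * L := by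
          rw [ht2]; field_simp
        have hμ0ne : μ0 ≠ 0 := hμ0_pos.ne'
        have hMne : M ≠ 0 := hM.ne'
        have hstep : (D:ℝ) * (t ^ 2 * μ0 / (2 * B0 * μ0)) ≤ (D:ℝ) * (ε ^ 2 / (2 * B0 * μ0)) := by
          gcongr
        have heq : (D:ℝ) * (t ^ 2 * μ0 / (2 * B0 * μ0)) = 9 / 8 * L := by
          rw [ht2, hB0def]
          field_simp
          ring
        have key : L ≤ (D:ℝ) * (ε ^ 2 / (2 * B0 * μ0)) := by
          rw [heq] at hstep
          linarith
        have h2B : 0 < 2 * B0 * μ0 := by positivity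
        have : (D:ℝ) * (-ε ^ 2 / (2 * B0 * μ0)) = -((D:ℝ) * (ε ^ 2 / (2 * B0 * μ0))) := by ring
        rw [this]
        linarith
      calc Real.exp (lam * ((D:ℝ) * a)) * I1 ^ D
          ≤ Real.exp ((D:ℝ) * (-lam * ε + lam ^ 2 * B0 * μ0 / 2)) := by rw [← h3]; exact h2
        _ = Real.exp ((D:ℝ) * (-ε ^ 2 / (2 * B0 * μ0))) := by rw [h4]
        _ ≤ Real.exp (-L) := Real.exp_le_exp.mpr h5
        _ = δ := by rw [hLdef, one_div, Real.log_inv, neg_neg, Real.exp_log hδ0]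
    -- Markov
    have hGc_sub : Gᶜ ⊆ {Γ : Fin D → Γ₀ | 1 ≤ W Γ} := by
      intro Γ hΓ
      simp only [hGdef, Set.mem_compl_iff, Set.mem_setOf_eq, not_le] at hΓ
      simp only [Set.mem_setOf_eq, hWdef]
      rw [show (1:ℝ) = Real.exp 0 from Real.exp_zero.symm]
      apply Real.exp_le_exp.mpr
      nlinarith
    have hmarkov := mul_meas_ge_le_integral_of_nonneg
      (μ := Measure.pi fun _ : Fin D => p)
      (Filter.Eventually.of_forall hW_nonneg) iW 1
    rw [one_mul] at hmarkov
    have hGc : (Measure.pi fun _ : Fin D => p) Gᶜ ≤ ENNReal.ofReal δ := by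
      have hle : (Measure.pi fun _ : Fin D => p) Gᶜ
          ≤ (Measure.pi fun _ : Fin D => p) {Γ | 1 ≤ W Γ} := measure_mono hGc_sub
      have h1 : ((Measure.pi fun _ : Fin D => p) Gᶜ).toReal ≤ δ := by
        have := ENNReal.toReal_mono (measure_ne_top _ _) hle
        rw [measureReal_def] at hmarkov
        linarith [hmarkov, hexp_bound]
      calc (Measure.pi fun _ : Fin D => p) Gᶜ
          = ENNReal.ofReal ((Measure.pi fun _ : Fin D => p) Gᶜ).toReal :=
            (ENNReal.ofReal_toReal (measure_ne_top _ _)).symm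
        _ ≤ ENNReal.ofReal δ := ENNReal.ofReal_le_ofReal h1
    have hcompl : (Measure.pi fun _ : Fin D => p) G + (Measure.pi fun _ : Fin D => p) Gᶜ = 1 := by
      rw [measure_add_measure_compl hGmeas, measure_univ]
    calc ENNReal.ofReal (1 - δ)
        = 1 - ENNReal.ofReal δ := by
          rw [ENNReal.ofReal_sub 1 hδ0.le, ENNReal.ofReal_one]
      _ ≤ (Measure.pi fun _ : Fin D => p) G := by
          rw [tsub_le_iff_right]
          calc (1 : ENNReal)
              = (Measure.pi fun _ : Fin D => p) G + (Measure.pi fun _ : Fin D => p) Gᶜ :=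
                hcompl.symm
            _ ≤ (Measure.pi fun _ : Fin D => p) G + ENNReal.ofReal δ := by gcongr
      _ ≤ _ := measure_mono hGsub
end

section
/- Let Z ∼ P and define, for a realization Γ = (γ_1,…,γ_D) of i.i.d. draws from p, the ℝ^{D×D} matrix G(Γ) = E_Z[(φ_Γ(Z) − m_Γ)(φ_Γ(Z) − m_Γ)^T] with m_Γ = E_Z[φ_Γ(Z)]. Let Σ be the covariance operator in H of ψ(Z), i.e. Σ v = E_Z[⟨v, ψ(Z) − μ⟩_H (ψ(Z) − μ)] with μ = E_Z[ψ(Z)], and tr Σ = E_Z[‖ψ(Z) − μ‖²_H]. Then ‖Σ‖_op ≤ E_Γ[‖G(Γ)‖_op] ≤ ‖Σ‖_op + √( tr Σ / D ), where ‖G(Γ)‖_op is the spectral norm of the matrix G(Γ). -/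
open MeasureTheory
open scoped RealInnerProductSpace BigOperators

set_option linter.unusedSectionVars false
set_option linter.unusedVariables false
set_option maxHeartbeats 2000000


section helpers
variable {α : Type*} [MeasurableSpace α] {μ : Measure α}

lemma my_bddInt {E : Type*} [NormedAddCommGroup E] [IsFiniteMeasure μ] {f : α → E}
    (hm : AEStronglyMeasurable f μ) {C : ℝ} (hb : ∀ x, ‖f x‖ ≤ C) : Integrable f μ :=
  ⟨hm, HasFiniteIntegral.of_bounded (Filter.Eventually.of_forall hb)⟩

lemma my_cs [IsFiniteMeasure μ] {f g : α → ℝ}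
    (hfm : AEStronglyMeasurable f μ) (hgm : AEStronglyMeasurable g μ)
    {Cf Cg : ℝ} (hCf : 0 ≤ Cf) (hCg : 0 ≤ Cg)
    (hfb : ∀ x, |f x| ≤ Cf) (hgb : ∀ x, |g x| ≤ Cg) :
    ∫ x, f x * g x ∂μ ≤ Real.sqrt (∫ x, (f x)^2 ∂μ) * Real.sqrt (∫ x, (g x)^2 ∂μ) := by
  have hif2 : Integrable (fun x => (f x)^2) μ := by
    have : (fun x => (f x)^2) = fun x => f x * f x := by funext x; ring
    rw [this]
    refine my_bddInt (hfm.mul hfm) (C := Cf*Cf) (fun x => ?_)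
    rw [Real.norm_eq_abs, abs_mul]
    exact mul_le_mul (hfb x) (hfb x) (abs_nonneg _) hCf
  have hig2 : Integrable (fun x => (g x)^2) μ := by
    have : (fun x => (g x)^2) = fun x => g x * g x := by funext x; ring
    rw [this]
    refine my_bddInt (hgm.mul hgm) (C := Cg*Cg) (fun x => ?_)
    rw [Real.norm_eq_abs, abs_mul]
    exact mul_le_mul (hgb x) (hgb x) (abs_nonneg _) hCg
  have hifg : Integrable (fun x => f x * g x) μ := by
    refine my_bddInt (hfm.mul hgm) (C := Cf * Cg) (fun x => ?_)
    rw [Real.norm_eq_abs, abs_mul]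
    exact mul_le_mul (hfb x) (hgb x) (abs_nonneg _) hCf
  set A := ∫ x, (f x)^2 ∂μ with hA
  set B := ∫ x, f x * g x ∂μ with hB
  set C := ∫ x, (g x)^2 ∂μ with hC
  have hA0 : 0 ≤ A := integral_nonneg fun x => sq_nonneg _
  have hC0 : 0 ≤ C := integral_nonneg fun x => sq_nonneg _
  have key : B^2 ≤ A * C := by
    have hdisc : ∀ t : ℝ, 0 ≤ A * (t * t) + (2*B) * t + C := by
      intro t
      have i12 : Integrable (fun x => (t*t) * (f x)^2 + (2*t) * (f x * g x)) μ :=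
        (hif2.const_mul _).add (hifg.const_mul _)
      have : A * (t * t) + (2*B) * t + C = ∫ x, (t * f x + g x)^2 ∂μ := by
        have heq : (fun x => (t * f x + g x)^2)
            = fun x => (t*t) * (f x)^2 + (2*t) * (f x * g x) + (g x)^2 := by
          funext x; ring
        rw [heq, integral_add i12 hig2,
          integral_add (hif2.const_mul (t*t)) (hifg.const_mul (2*t)),
          integral_const_mul, integral_const_mul]
        ring
      rw [this]
      exact integral_nonneg fun x => sq_nonneg _
    have := discrim_le_zero hdisc
    rw [discrim] at this
    nlinarith
  calc B ≤ |B| := le_abs_self B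
    _ = Real.sqrt (B^2) := (Real.sqrt_sq_eq_abs B).symm
    _ ≤ Real.sqrt (A * C) := Real.sqrt_le_sqrt key
    _ = Real.sqrt A * Real.sqrt C := Real.sqrt_mul hA0 _

end helpers

section ops
variable {Z : Type*} [MeasurableSpace Z] {P : Measure Z} [IsFiniteMeasure P]
variable {E : Type*} [NormedAddCommGroup E] [InnerProductSpace ℝ E] [CompleteSpace E]

lemma my_int_smul {F : Z → E} (hFm : AEStronglyMeasurable F P) {C : ℝ}
    (hFb : ∀ z, ‖F z‖ ≤ C) {f : Z → ℝ} (hfm : AEStronglyMeasurable f P) {Cf : ℝ}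
    (hCf : 0 ≤ Cf) (hfb : ∀ z, |f z| ≤ Cf) :
    Integrable (fun z => f z • F z) P := by
  refine my_bddInt (hfm.smul hFm) (C := Cf * C) fun z => ?_
  rw [norm_smul, Real.norm_eq_abs]
  exact mul_le_mul (hfb z) (hFb z) (norm_nonneg _) hCf

lemma my_inner_aesm {F : Z → E} (hFm : AEStronglyMeasurable F P) (v : E) :
    AEStronglyMeasurable (fun z => ⟪v, F z⟫) P :=
  AEStronglyMeasurable.inner aestronglyMeasurable_const hFm

lemma my_inner_bd {F : Z → E} {C : ℝ} (hFb : ∀ z, ‖F z‖ ≤ C) (v : E) (z : Z) :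
    |⟪v, F z⟫| ≤ ‖v‖ * C :=
  (abs_real_inner_le_norm v (F z)).trans
    (mul_le_mul_of_nonneg_left (hFb z) (norm_nonneg v))

lemma my_int_inner_smul {F : Z → E} (hFm : AEStronglyMeasurable F P) {C : ℝ}
    (hC : 0 ≤ C) (hFb : ∀ z, ‖F z‖ ≤ C) (v : E) :
    Integrable (fun z => ⟪v, F z⟫ • F z) P :=
  my_int_smul hFm hFb (my_inner_aesm hFm v)
    (mul_nonneg (norm_nonneg v) hC) (my_inner_bd hFb v)

end ops

lemma my_norm_sup {E : Type*} [NormedAddCommGroup E] [NormedSpace ℝ E]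
    [SecondCountableTopology E] :
    ∃ e : ℕ → E, (∀ n, ‖e n‖ ≤ 1) ∧ ∀ (A : E →L[ℝ] E), ‖A‖ = ⨆ n, ‖A (e n)‖ := by
  have hsep : TopologicalSpace.IsSeparable (Metric.closedBall (0:E) 1) :=
    (TopologicalSpace.isSeparable_univ_iff.2 inferInstance).mono (Set.subset_univ _)
  obtain ⟨t, hts, htc, htd⟩ := hsep.exists_countable_dense_subset
  have htne : t.Nonempty := by
    rcases Set.eq_empty_or_nonempty t with h | h
    · exfalso
      have : (0:E) ∈ closure t := htd (Metric.mem_closedBall_self zero_le_one)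
      rw [h, closure_empty] at this
      exact this
    · exact h
  obtain ⟨e, he⟩ := Set.Countable.exists_eq_range htc htne
  refine ⟨e, fun n => ?_, fun A => ?_⟩
  · have : e n ∈ t := by rw [he]; exact Set.mem_range_self n
    simpa [Metric.mem_closedBall, dist_eq_norm] using hts this
  · have hbdd : BddAbove (Set.range fun n => ‖A (e n)‖) := by
      refine ⟨‖A‖, fun x hx => ?_⟩
      obtain ⟨n, rfl⟩ := hx
      have h1 : e n ∈ t := by rw [he]; exact Set.mem_range_self n
      have h2 : ‖e n‖ ≤ 1 := by
        simpa [Metric.mem_closedBall, dist_eq_norm] using hts h1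
      calc ‖A (e n)‖ ≤ ‖A‖ * ‖e n‖ := A.le_opNorm _
        _ ≤ ‖A‖ * 1 := mul_le_mul_of_nonneg_left h2 (norm_nonneg A)
        _ = ‖A‖ := mul_one _
    set M := ⨆ n, ‖A (e n)‖ with hM
    have hM0 : 0 ≤ M := (norm_nonneg (A (e 0))).trans (le_ciSup hbdd 0)
    refine le_antisymm ?_ (ciSup_le fun n => ?_)
    · refine A.opNorm_le_bound hM0 fun v => ?_
      rcases eq_or_ne v 0 with rfl | hv
      · simp
      · have hvn : ‖v‖ ≠ 0 := norm_ne_zero_iff.2 hv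
        set w := ‖v‖⁻¹ • v with hw
        have hwb : w ∈ Metric.closedBall (0:E) 1 := by
          simp only [Metric.mem_closedBall, dist_zero_right, hw, norm_smul,
            norm_inv, norm_norm]
          rw [inv_mul_cancel₀ hvn]
        have hcl : Metric.closedBall (0:E) 1 ⊆ {x | ‖A x‖ ≤ M} := by
          refine htd.trans (closure_minimal ?_ ?_)
          · intro x hx
            have : x ∈ Set.range e := by rw [← he]; exact hx
            obtain ⟨n, rfl⟩ := this
            exact le_ciSup hbdd n
          · exact isClosed_le (A.continuous.norm) continuous_const
        have hAw : ‖A w‖ ≤ M := hcl hwb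
        have hv2 : v = ‖v‖ • w := by
          rw [hw, smul_smul, mul_inv_cancel₀ hvn, one_smul]
        calc ‖A v‖ = ‖A (‖v‖ • w)‖ := by rw [← hv2]
          _ = ‖v‖ * ‖A w‖ := by rw [A.map_smul, norm_smul, norm_norm]
          _ ≤ ‖v‖ * M := mul_le_mul_of_nonneg_left hAw (norm_nonneg v)
          _ = M * ‖v‖ := mul_comm _ _
    · obtain ⟨m, rfl⟩ : ∃ x, e n = x := ⟨e n, rfl⟩
      have h1 : e n ∈ t := by rw [he]; exact Set.mem_range_self n
      have h2 : ‖e n‖ ≤ 1 := by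
        simpa [Metric.mem_closedBall, dist_eq_norm] using hts h1
      calc ‖A (e n)‖ ≤ ‖A‖ * ‖e n‖ := A.le_opNorm _
        _ ≤ ‖A‖ * 1 := mul_le_mul_of_nonneg_left h2 (norm_nonneg A)
        _ = ‖A‖ := mul_one _

section pi
variable {Γ₀ : Type*} [MeasurableSpace Γ₀] (p : Measure Γ₀) [IsProbabilityMeasure p]
variable {D : ℕ}

lemma my_marg1 (g : Γ₀ → ℝ) (s : Fin D) :
    ∫ Γ, g (Γ s) ∂(Measure.pi fun _ : Fin D => p) = ∫ γ, g γ ∂p := by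
  letI : MeasureSpace Γ₀ := ⟨p⟩
  haveI : SigmaFinite (volume : Measure Γ₀) := inferInstanceAs (SigmaFinite p)
  have hvol : (Measure.pi fun _ : Fin D => p) = (volume : Measure (Fin D → Γ₀)) :=
    (volume_pi (α := fun _ : Fin D => Γ₀)).symm
  rw [hvol]
  have h1 : ∀ Γ : Fin D → Γ₀, g (Γ s)
      = ∏ i, (fun i : Fin D => if i = s then g else fun _ => (1:ℝ)) i (Γ i) := by
    intro Γ
    rw [Finset.prod_eq_single s (fun b _ hb => by simp [hb]) (by simp)]
    simp
  simp_rw [h1]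
  rw [volume_pi, MeasureTheory.integral_fintype_prod_eq_prod (𝕜 := ℝ) (μ := fun _ => volume)
    (f := fun i : Fin D => if i = s then g else fun _ => (1:ℝ))]
  rw [Finset.prod_eq_single s (fun b _ hb => by simp [hb]) (by simp)]
  simp
  rfl

lemma my_marg2 (g : Γ₀ → ℝ) {s t : Fin D} (hst : s ≠ t) :
    ∫ Γ, g (Γ s) * g (Γ t) ∂(Measure.pi fun _ : Fin D => p)
      = (∫ γ, g γ ∂p) * (∫ γ, g γ ∂p) := by
  letI : MeasureSpace Γ₀ := ⟨p⟩
  haveI : SigmaFinite (volume : Measure Γ₀) := inferInstanceAs (SigmaFinite p)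
  have hvol : (Measure.pi fun _ : Fin D => p) = (volume : Measure (Fin D → Γ₀)) :=
    (volume_pi (α := fun _ : Fin D => Γ₀)).symm
  rw [hvol]
  set f : Fin D → Γ₀ → ℝ := fun i => if i = s then g else if i = t then g else fun _ => 1
    with hf
  have h1 : ∀ Γ : Fin D → Γ₀, g (Γ s) * g (Γ t) = ∏ i, f i (Γ i) := by
    intro Γ
    rw [← Finset.mul_prod_erase Finset.univ (fun i => f i (Γ i)) (Finset.mem_univ s)]
    rw [Finset.prod_eq_single_of_mem t
      (Finset.mem_erase.2 ⟨Ne.symm hst, Finset.mem_univ t⟩)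
      (fun b hb hbt => by
        have hbs := (Finset.mem_erase.1 hb).1
        simp [hf, hbs, hbt])]
    simp [hf, hst, Ne.symm hst]
  simp_rw [h1]
  rw [volume_pi, MeasureTheory.integral_fintype_prod_eq_prod (𝕜 := ℝ) (μ := fun _ => volume) (f := f)]
  rw [← Finset.mul_prod_erase Finset.univ (fun i => ∫ x, f i x) (Finset.mem_univ s)]
  rw [Finset.prod_eq_single_of_mem t
    (Finset.mem_erase.2 ⟨Ne.symm hst, Finset.mem_univ t⟩)
    (fun b hb hbt => by
      have hbs := (Finset.mem_erase.1 hb).1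
      simp [hf, hbs, hbt])]
  simp [hf, hst, Ne.symm hst]
  rfl

lemma my_var (hD : 0 < D) {a : Γ₀ → ℝ} (ham : Measurable a) {Ca : ℝ} (hCa : 0 ≤ Ca)
    (hab : ∀ γ, |a γ| ≤ Ca) :
    ∫ Γ, ((D:ℝ)⁻¹ * ∑ s, a (Γ s) - ∫ γ, a γ ∂p)^2 ∂(Measure.pi fun _ : Fin D => p)
      ≤ (D:ℝ)⁻¹ * ∫ γ, (a γ)^2 ∂p := by
  set pD := (Measure.pi fun _ : Fin D => p) with hpD
  haveI : IsProbabilityMeasure pD := by rw [hpD]; infer_instance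
  set A := ∫ γ, a γ ∂p with hA
  set I2 := ∫ γ, (a γ)^2 ∂p with hI2
  have hint_st : ∀ s t : Fin D, Integrable (fun Γ : Fin D → Γ₀ => a (Γ s) * a (Γ t)) pD := by
    intro s t
    refine my_bddInt (C := Ca * Ca) ?_ (fun Γ => ?_)
    · exact ((ham.comp (measurable_pi_apply s)).mul
        (ham.comp (measurable_pi_apply t))).aestronglyMeasurable
    · rw [Real.norm_eq_abs, abs_mul]
      exact mul_le_mul (hab _) (hab _) (abs_nonneg _) hCa
  have hint_s : ∀ s : Fin D, Integrable (fun Γ : Fin D → Γ₀ => a (Γ s)) pD := by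
    intro s
    exact my_bddInt ((ham.comp (measurable_pi_apply s)).aestronglyMeasurable)
      (C := Ca) (fun Γ => hab _)
  -- integral of double sum
  have hS2 : ∫ Γ, (∑ s, a (Γ s)) * (∑ t, a (Γ t)) ∂pD
      = (D:ℝ) * I2 + ((D:ℝ)^2 - (D:ℝ)) * A^2 := by
    have expand : ∀ Γ : Fin D → Γ₀, (∑ s, a (Γ s)) * (∑ t, a (Γ t))
        = ∑ s, ∑ t, a (Γ s) * a (Γ t) := fun Γ => Finset.sum_mul_sum _ _ _ _
    simp_rw [expand]
    rw [integral_finset_sum _ (fun s _ => integrable_finset_sum _ (fun t _ => hint_st s t))]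
    have : ∀ s : Fin D, ∫ Γ, (∑ t, a (Γ s) * a (Γ t)) ∂pD
        = ∑ t, ∫ Γ, a (Γ s) * a (Γ t) ∂pD := by
      intro s; exact integral_finset_sum _ (fun t _ => hint_st s t)
    simp_rw [this]
    have hval : ∀ s t : Fin D, ∫ Γ, a (Γ s) * a (Γ t) ∂pD
        = if s = t then I2 else A^2 := by
      intro s t
      by_cases hst : s = t
      · subst hst
        rw [if_pos rfl]
        have : ∀ Γ : Fin D → Γ₀, a (Γ s) * a (Γ s) = (fun γ => (a γ)^2) (Γ s) := by
          intro Γ; simp [sq]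
        simp_rw [this]
        rw [hpD, my_marg1 p (fun γ => (a γ)^2) s]
      · rw [if_neg hst, hpD, my_marg2 p a hst, hA, sq]
    simp_rw [hval]
    have hrow : ∀ s : Fin D, ∑ t, (if s = t then I2 else A^2)
        = I2 + ((D:ℝ) - 1) * A^2 := by
      intro s
      have : ∀ t : Fin D, (if s = t then I2 else A^2)
          = A^2 + (if s = t then I2 - A^2 else 0) := by
        intro t; by_cases h : s = t <;> simp [h]
      simp_rw [this]
      rw [Finset.sum_add_distrib, Finset.sum_const, Finset.sum_ite_eq]
      simp [Finset.card_univ]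
      ring
    simp_rw [hrow]
    rw [Finset.sum_const, Finset.card_univ]
    simp only [Fintype.card_fin, nsmul_eq_mul]
    ring
  have hS1 : ∫ Γ, (∑ s, a (Γ s)) ∂pD = (D:ℝ) * A := by
    rw [integral_finset_sum _ (fun s _ => hint_s s)]
    have : ∀ s : Fin D, ∫ Γ, a (Γ s) ∂pD = A := fun s => by rw [hpD, my_marg1]
    simp_rw [this]
    rw [Finset.sum_const, Finset.card_univ]
    simp only [Fintype.card_fin, nsmul_eq_mul]
  -- expand the square
  have hexp : ∀ Γ : Fin D → Γ₀, ((D:ℝ)⁻¹ * ∑ s, a (Γ s) - A)^2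
      = (D:ℝ)⁻¹ * (D:ℝ)⁻¹ * ((∑ s, a (Γ s)) * (∑ t, a (Γ t)))
        + (-2 * (D:ℝ)⁻¹ * A) * (∑ s, a (Γ s)) + A^2 := by
    intro Γ; ring
  simp_rw [hexp]
  have hiS2 : Integrable (fun Γ : Fin D → Γ₀ => (∑ s, a (Γ s)) * (∑ t, a (Γ t))) pD := by
    have : (fun Γ : Fin D → Γ₀ => (∑ s, a (Γ s)) * (∑ t, a (Γ t)))
        = fun Γ => ∑ s, ∑ t, a (Γ s) * a (Γ t) := by
      funext Γ; exact Finset.sum_mul_sum _ _ _ _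
    rw [this]
    exact integrable_finset_sum _ (fun s _ => integrable_finset_sum _ (fun t _ => hint_st s t))
  have hiS1 : Integrable (fun Γ : Fin D → Γ₀ => ∑ s, a (Γ s)) pD :=
    integrable_finset_sum _ (fun s _ => hint_s s)
  have i12 : Integrable (fun Γ : Fin D → Γ₀ =>
      (D:ℝ)⁻¹ * (D:ℝ)⁻¹ * ((∑ s, a (Γ s)) * (∑ t, a (Γ t)))
        + (-2 * (D:ℝ)⁻¹ * A) * (∑ s, a (Γ s))) pD :=
    (hiS2.const_mul _).add (hiS1.const_mul _)
  rw [integral_add i12 (integrable_const _),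
    integral_add (hiS2.const_mul ((D:ℝ)⁻¹ * (D:ℝ)⁻¹)) (hiS1.const_mul (-2 * (D:ℝ)⁻¹ * A)),
    integral_const_mul, integral_const_mul, hS2, hS1, integral_const]
  simp only [measure_univ, ENNReal.toReal_one, smul_eq_mul, one_mul, probReal_univ]
  have hD' : (D:ℝ) ≠ 0 := Nat.cast_ne_zero.2 hD.ne'
  have hA2 : 0 ≤ A^2 := sq_nonneg A
  have hDpos : (0:ℝ) < D := Nat.cast_pos.2 hD
  have : (D:ℝ)⁻¹ * (D:ℝ)⁻¹ * ((D:ℝ) * I2 + ((D:ℝ)^2 - (D:ℝ)) * A^2)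
      + -2 * (D:ℝ)⁻¹ * A * ((D:ℝ) * A) + A^2 = (D:ℝ)⁻¹ * I2 - (D:ℝ)⁻¹ * A^2 := by
    field_simp
    ring
  rw [this]
  have : 0 ≤ (D:ℝ)⁻¹ * A^2 := by positivity
  linarith

end pi

section ops2
variable {Z : Type*} [MeasurableSpace Z] {P : Measure Z} [IsFiniteMeasure P]
variable {E : Type*} [NormedAddCommGroup E] [InnerProductSpace ℝ E] [CompleteSpace E]


variable {F : Z → E} {C : ℝ}

lemma my_cov_inner (hFm : AEStronglyMeasurable F P) (hC : 0 ≤ C) (hFb : ∀ z, ‖F z‖ ≤ C)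
    (T : E →L[ℝ] E) (hT : ∀ v, T v = ∫ z, ⟪v, F z⟫ • F z ∂P) (v w : E) :
    ⟪w, T v⟫ = ∫ z, ⟪v, F z⟫ * ⟪w, F z⟫ ∂P := by
  rw [hT, ← integral_inner (my_int_inner_smul hFm hC hFb v) w]
  congr 1; funext z
  rw [real_inner_smul_right]

lemma my_quad (hFm : AEStronglyMeasurable F P) (hC : 0 ≤ C) (hFb : ∀ z, ‖F z‖ ≤ C)
    (T : E →L[ℝ] E) (hT : ∀ v, T v = ∫ z, ⟪v, F z⟫ • F z ∂P) (v : E) :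
    ⟪v, T v⟫ = ∫ z, ⟪v, F z⟫ ^ 2 ∂P := by
  rw [my_cov_inner hFm hC hFb T hT v v]
  congr 1; funext z; rw [sq]

lemma my_opbd (hFm : AEStronglyMeasurable F P) (hC : 0 ≤ C) (hFb : ∀ z, ‖F z‖ ≤ C)
    (T : E →L[ℝ] E) (hT : ∀ v, T v = ∫ z, ⟪v, F z⟫ • F z ∂P) {B : ℝ} (hB : 0 ≤ B)
    (hq : ∀ v, ∫ z, ⟪v, F z⟫ ^ 2 ∂P ≤ B * ‖v‖ ^ 2) : ‖T‖ ≤ B := by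
  refine T.opNorm_le_bound hB fun v => ?_
  have key : ‖T v‖ ^ 2 = ∫ z, ⟪v, F z⟫ * ⟪T v, F z⟫ ∂P := by
    rw [← my_cov_inner hFm hC hFb T hT v (T v), real_inner_self_eq_norm_sq]
  have h2 : ∫ z, ⟪v, F z⟫ * ⟪T v, F z⟫ ∂P
      ≤ Real.sqrt (∫ z, ⟪v, F z⟫ ^ 2 ∂P) * Real.sqrt (∫ z, ⟪T v, F z⟫ ^ 2 ∂P) :=
    my_cs (my_inner_aesm hFm v) (my_inner_aesm hFm (T v))
      (mul_nonneg (norm_nonneg v) hC) (mul_nonneg (norm_nonneg (T v)) hC)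
      (my_inner_bd hFb v) (my_inner_bd hFb (T v))
  have h3 : Real.sqrt (∫ z, ⟪v, F z⟫ ^ 2 ∂P) ≤ Real.sqrt B * ‖v‖ := by
    calc Real.sqrt (∫ z, ⟪v, F z⟫ ^ 2 ∂P) ≤ Real.sqrt (B * ‖v‖ ^ 2) :=
          Real.sqrt_le_sqrt (hq v)
      _ = Real.sqrt B * ‖v‖ := by
          rw [Real.sqrt_mul hB, Real.sqrt_sq (norm_nonneg v)]
  have h4 : Real.sqrt (∫ z, ⟪T v, F z⟫ ^ 2 ∂P) ≤ Real.sqrt B * ‖T v‖ := by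
    calc Real.sqrt (∫ z, ⟪T v, F z⟫ ^ 2 ∂P) ≤ Real.sqrt (B * ‖T v‖ ^ 2) :=
          Real.sqrt_le_sqrt (hq (T v))
      _ = Real.sqrt B * ‖T v‖ := by
          rw [Real.sqrt_mul hB, Real.sqrt_sq (norm_nonneg (T v))]
  have h5 : ‖T v‖ ^ 2 ≤ B * ‖v‖ * ‖T v‖ := by
    have hs2 : (0:ℝ) ≤ Real.sqrt (∫ z, ⟪T v, F z⟫ ^ 2 ∂P) := Real.sqrt_nonneg _
    have hsB : Real.sqrt B * Real.sqrt B = B := Real.mul_self_sqrt hB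
    have h6 : ‖T v‖ ^ 2 ≤ (Real.sqrt B * ‖v‖) * (Real.sqrt B * ‖T v‖) := by
      rw [key]; exact h2.trans (mul_le_mul h3 h4 hs2 (by positivity))
    have h7 : (Real.sqrt B * ‖v‖) * (Real.sqrt B * ‖T v‖) = B * ‖v‖ * ‖T v‖ := by
      calc (Real.sqrt B * ‖v‖) * (Real.sqrt B * ‖T v‖)
          = (Real.sqrt B * Real.sqrt B) * (‖v‖ * ‖T v‖) := by ring
        _ = B * ‖v‖ * ‖T v‖ := by rw [hsB]; ring
    linarith
  rcases eq_or_lt_of_le (norm_nonneg (T v)) with h0 | h0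
  · rw [← h0]; positivity
  · nlinarith [h5]

lemma my_covQ (hFm : AEStronglyMeasurable F P) (hC : 0 ≤ C) (hFb : ∀ z, ‖F z‖ ≤ C)
    (T : E →L[ℝ] E) (hT : ∀ v, T v = ∫ z, ⟪v, F z⟫ • F z ∂P)
    {f : Z → ℝ} (hfm : AEStronglyMeasurable f P) {Cf : ℝ} (hCf : 0 ≤ Cf)
    (hfb : ∀ z, |f z| ≤ Cf) :
    ‖∫ z, f z • F z ∂P‖ ^ 2 ≤ ‖T‖ * ∫ z, (f z) ^ 2 ∂P := by
  set u := ∫ z, f z • F z ∂P with hu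
  have hint : Integrable (fun z => f z • F z) P := my_int_smul hFm hFb hfm hCf hfb
  have h1 : ‖u‖ ^ 2 = ∫ z, f z * ⟪u, F z⟫ ∂P := by
    rw [← real_inner_self_eq_norm_sq, hu, ← integral_inner hint]
    congr 1; funext z; rw [real_inner_smul_right]
  have h2 : ∫ z, f z * ⟪u, F z⟫ ∂P
      ≤ Real.sqrt (∫ z, (f z) ^ 2 ∂P) * Real.sqrt (∫ z, ⟪u, F z⟫ ^ 2 ∂P) :=
    my_cs hfm (my_inner_aesm hFm u) hCf (mul_nonneg (norm_nonneg u) hC)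
      hfb (my_inner_bd hFb u)
  have h3 : ∫ z, ⟪u, F z⟫ ^ 2 ∂P ≤ ‖T‖ * ‖u‖ ^ 2 := by
    rw [← my_quad hFm hC hFb T hT u]
    calc ⟪u, T u⟫ ≤ ‖u‖ * ‖T u‖ := real_inner_le_norm u (T u)
      _ ≤ ‖u‖ * (‖T‖ * ‖u‖) := by
          exact mul_le_mul_of_nonneg_left (T.le_opNorm u) (norm_nonneg u)
      _ = ‖T‖ * ‖u‖ ^ 2 := by ring
  have h4 : Real.sqrt (∫ z, ⟪u, F z⟫ ^ 2 ∂P) ≤ Real.sqrt ‖T‖ * ‖u‖ := by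
    calc Real.sqrt (∫ z, ⟪u, F z⟫ ^ 2 ∂P) ≤ Real.sqrt (‖T‖ * ‖u‖ ^ 2) :=
          Real.sqrt_le_sqrt h3
      _ = Real.sqrt ‖T‖ * ‖u‖ := by
          rw [Real.sqrt_mul (norm_nonneg T), Real.sqrt_sq (norm_nonneg u)]
  have h5 : ‖u‖ ^ 2 ≤ Real.sqrt (∫ z, (f z) ^ 2 ∂P) * (Real.sqrt ‖T‖ * ‖u‖) := by
    calc ‖u‖ ^ 2 = ∫ z, f z * ⟪u, F z⟫ ∂P := h1
      _ ≤ Real.sqrt (∫ z, (f z) ^ 2 ∂P) * Real.sqrt (∫ z, ⟪u, F z⟫ ^ 2 ∂P) := h2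
      _ ≤ Real.sqrt (∫ z, (f z) ^ 2 ∂P) * (Real.sqrt ‖T‖ * ‖u‖) :=
          mul_le_mul_of_nonneg_left h4 (Real.sqrt_nonneg _)
  have hint2 : (0:ℝ) ≤ ∫ z, (f z) ^ 2 ∂P := integral_nonneg fun z => sq_nonneg _
  rcases eq_or_lt_of_le (norm_nonneg u) with h0 | h0
  · rw [← h0]
    simpa using mul_nonneg (norm_nonneg (T : E →L[ℝ] E)) hint2
  · have h6 : ‖u‖ ≤ Real.sqrt (∫ z, (f z) ^ 2 ∂P) * Real.sqrt ‖T‖ := by nlinarith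
    calc ‖u‖ ^ 2 ≤ (Real.sqrt (∫ z, (f z) ^ 2 ∂P) * Real.sqrt ‖T‖) ^ 2 := by
          have hr : 0 ≤ Real.sqrt (∫ z, (f z) ^ 2 ∂P) * Real.sqrt ‖T‖ :=
            mul_nonneg (Real.sqrt_nonneg _) (Real.sqrt_nonneg _)
          nlinarith
      _ = ‖T‖ * ∫ z, (f z) ^ 2 ∂P := by
          rw [mul_pow, Real.sq_sqrt hint2, Real.sq_sqrt (norm_nonneg T)]; ring

lemma my_expand (hFm : AEStronglyMeasurable F P) (hC : 0 ≤ C) (hFb : ∀ z, ‖F z‖ ≤ C)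
    {f : Z → ℝ} (hfm : AEStronglyMeasurable f P) {Cf : ℝ} (hCf : 0 ≤ Cf)
    (hfb : ∀ z, |f z| ≤ Cf) :
    ‖∫ z, f z • F z ∂P‖ ^ 2 = ∫ z', ∫ z, (f z * f z') * ⟪F z, F z'⟫ ∂P ∂P := by
  set u := ∫ z, f z • F z ∂P with hu
  have hint : Integrable (fun z => f z • F z) P := my_int_smul hFm hFb hfm hCf hfb
  have h1 : ‖u‖ ^ 2 = ∫ z', f z' * ⟪u, F z'⟫ ∂P := by
    rw [← real_inner_self_eq_norm_sq]
    nth_rewrite 2 [hu]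
    rw [← integral_inner hint u]
    congr 1; funext z; rw [real_inner_smul_right]
  rw [h1]
  congr 1; funext z'
  have h2 : ⟪u, F z'⟫ = ∫ z, f z * ⟪F z, F z'⟫ ∂P := by
    rw [real_inner_comm, hu, ← integral_inner hint (F z')]
    congr 1; funext z
    rw [real_inner_smul_right, real_inner_comm]
  rw [h2, ← integral_const_mul]
  congr 1; funext z; ring

end ops2

section swaps
variable {A B : Type*} [MeasurableSpace A] [MeasurableSpace B]
  {μ : Measure A} {ν : Measure B} [IsFiniteMeasure μ] [IsFiniteMeasure ν]

lemma my_joint_int {f : A → B → ℝ} (hm : Measurable (Function.uncurry f)) {C : ℝ}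
    (hb : ∀ a b, |f a b| ≤ C) : Integrable (Function.uncurry f) (μ.prod ν) :=
  my_bddInt hm.aestronglyMeasurable (C := C) fun q => by
    rw [Real.norm_eq_abs]; exact hb q.1 q.2

lemma my_swap {f : A → B → ℝ} (hm : Measurable (Function.uncurry f)) {C : ℝ}
    (hb : ∀ a b, |f a b| ≤ C) :
    ∫ a, ∫ b, f a b ∂ν ∂μ = ∫ b, ∫ a, f a b ∂μ ∂ν :=
  integral_integral_swap (my_joint_int hm hb)

lemma my_prodform {f : A → B → ℝ} (hm : Measurable (Function.uncurry f)) {C : ℝ}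
    (hb : ∀ a b, |f a b| ≤ C) :
    ∫ a, ∫ b, f a b ∂ν ∂μ = ∫ q : A × B, f q.1 q.2 ∂(μ.prod ν) :=
  integral_integral (my_joint_int hm hb)

end swaps

section expand2
variable {Z : Type*} [MeasurableSpace Z] {P : Measure Z} [IsFiniteMeasure P]
variable {E : Type*} [NormedAddCommGroup E] [InnerProductSpace ℝ E] [CompleteSpace E]
  [MeasurableSpace E] [BorelSpace E] [SecondCountableTopology E]

lemma my_expand2 {F : Z → E} (hFm : Measurable F) {C : ℝ} (hC : 0 ≤ C)
    (hFb : ∀ z, ‖F z‖ ≤ C) {f : Z → ℝ} (hfm : Measurable f) {Cf : ℝ} (hCf : 0 ≤ Cf)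
    (hfb : ∀ z, |f z| ≤ Cf) :
    ‖∫ z, f z • F z ∂P‖ ^ 2
      = ∫ q : Z × Z, (f q.1 * f q.2) * ⟪F q.1, F q.2⟫ ∂(P.prod P) := by
  rw [my_expand hFm.aestronglyMeasurable hC hFb hfm.aestronglyMeasurable hCf hfb]
  have hm : Measurable (Function.uncurry fun z' z => (f z * f z') * ⟪F z, F z'⟫) := by
    apply Measurable.mul
    · exact (hfm.comp measurable_snd).mul (hfm.comp measurable_fst)
    · exact (hFm.comp measurable_snd).inner (hFm.comp measurable_fst)
  have hb : ∀ z' z, |(f z * f z') * ⟪F z, F z'⟫| ≤ Cf * Cf * (C * C) := by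
    intro z' z
    rw [abs_mul, abs_mul]
    refine mul_le_mul (mul_le_mul (hfb z) (hfb z') (abs_nonneg _) hCf) ?_
      (abs_nonneg _) (by positivity)
    exact (abs_real_inner_le_norm _ _).trans
      (mul_le_mul (hFb z) (hFb z') (norm_nonneg _) hC)
  rw [my_prodform (f := fun z' z => (f z * f z') * ⟪F z, F z'⟫) hm hb]
  congr 1; funext q
  rw [real_inner_comm]; ring_nf
end expand2

lemma my_sq_int {α : Type*} [MeasurableSpace α] {μ : Measure α} [IsProbabilityMeasure μ]
    {f : α → ℝ} (hm : Measurable f) {C : ℝ} (hC : 0 ≤ C) (hb : ∀ x, |f x| ≤ C) :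
    Integrable (fun x => (f x) ^ 2) μ ∧ ∫ x, (f x) ^ 2 ∂μ ≤ C ^ 2 := by
  have hble : ∀ x, |(f x) ^ 2| ≤ C ^ 2 := by
    intro x
    rw [abs_of_nonneg (sq_nonneg _), ← sq_abs]
    exact pow_le_pow_left₀ (abs_nonneg _) (hb x) 2
  have hint : Integrable (fun x => (f x) ^ 2) μ :=
    my_bddInt (hm.pow_const 2).aestronglyMeasurable (C := C ^ 2)
      (fun x => by rw [Real.norm_eq_abs]; exact hble x)
  refine ⟨hint, ?_⟩
  calc ∫ x, (f x) ^ 2 ∂μ ≤ ∫ _x, C ^ 2 ∂μ :=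
        integral_mono hint (integrable_const _) (fun x => le_of_abs_le (hble x))
    _ = C ^ 2 := by rw [integral_const]; simp

/-- The expected (over the random features `Γ ∼ p^{⊗D}`) spectral norm
of the covariance matrix `G(Γ)` of `φ_Γ(Z)` in `ℝ^D` is sandwiched as
`‖Σ‖_op ≤ E_Γ‖G(Γ)‖_op ≤ ‖Σ‖_op + √(tr Σ / D)`, where `Σ` is the covariance operator of
the kernel embedding `ψ(Z)` in `H`. -/
theorem stmt_15
    {Γ₀ : Type*} [MeasurableSpace Γ₀] (p : Measure Γ₀) [IsProbabilityMeasure p]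
    {Z : Type*} [MeasurableSpace Z]
    {H : Type*} [NormedAddCommGroup H] [InnerProductSpace ℝ H] [CompleteSpace H]
    [MeasurableSpace H] [BorelSpace H] [SecondCountableTopology H]
    (φ : Γ₀ → Z → ℝ) (hφm : Measurable (Function.uncurry φ))
    (hφb : ∀ γ z, |φ γ z| ≤ 1)
    (ψ : Z → H) (hψm : Measurable ψ)
    (hκ : ∀ z z', ⟪ψ z, ψ z'⟫ = ∫ γ, φ γ z * φ γ z' ∂p)
    (P : Measure Z) [IsProbabilityMeasure P]
    (D : ℕ) (hD : 0 < D)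
    (φΓ : (Fin D → Γ₀) → Z → EuclideanSpace ℝ (Fin D))
    (hφΓ : ∀ Γ z s, φΓ Γ z s = (Real.sqrt D)⁻¹ * φ (Γ s) z)
    (G : (Fin D → Γ₀) → EuclideanSpace ℝ (Fin D) →L[ℝ] EuclideanSpace ℝ (Fin D))
    (hG : ∀ Γ v, G Γ v =
      ∫ z, ⟪v, φΓ Γ z - ∫ w, φΓ Γ w ∂P⟫ • (φΓ Γ z - ∫ w, φΓ Γ w ∂P) ∂P)
    (Sig : H →L[ℝ] H)
    (hSig : ∀ v, Sig v =
      ∫ z, ⟪v, ψ z - ∫ w, ψ w ∂P⟫ • (ψ z - ∫ w, ψ w ∂P) ∂P) :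
    ‖Sig‖ ≤ (∫ Γ, ‖G Γ‖ ∂(Measure.pi fun _ : Fin D => p))
    ∧ (∫ Γ, ‖G Γ‖ ∂(Measure.pi fun _ : Fin D => p))
        ≤ ‖Sig‖ + Real.sqrt ((∫ z, ‖ψ z - ∫ w, ψ w ∂P‖ ^ 2 ∂P) / D) := by
  set pD := Measure.pi fun _ : Fin D => p with hpD
  haveI hpDP : IsProbabilityMeasure pD := by rw [hpD]; infer_instance
  -- basic measurability for φ
  have hφγm : ∀ γ, Measurable (φ γ) := fun γ => hφm.comp measurable_prodMk_left
  have hφzm : ∀ z, Measurable fun γ => φ γ z :=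
    fun z => hφm.comp (measurable_id.prodMk measurable_const)
  set c : Γ₀ → ℝ := fun γ => ∫ w, φ γ w ∂P with hcdef
  have hcm : Measurable c := hφm.stronglyMeasurable.integral_prod_right'.measurable
  have hcb : ∀ γ, |c γ| ≤ 1 := by
    intro γ
    have h1 : ‖∫ w, φ γ w ∂P‖ ≤ 1 * (P Set.univ).toReal :=
      norm_integral_le_of_norm_le_const (Filter.Eventually.of_forall fun w => by
        rw [Real.norm_eq_abs]; exact hφb γ w)
    simpa using h1
  set h : Γ₀ → Z → ℝ := fun γ z => φ γ z - c γ with hhdef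
  have hhjm : Measurable fun q : Γ₀ × Z => h q.1 q.2 := hφm.sub (hcm.comp measurable_fst)
  have hhzm : ∀ z, Measurable fun γ => h γ z := fun z => (hφzm z).sub hcm
  have hhγm : ∀ γ, Measurable (h γ) := fun γ => (hφγm γ).sub measurable_const
  have hhb : ∀ γ z, |h γ z| ≤ 2 := by
    intro γ z
    have := hφb γ z; have := hcb γ
    calc |φ γ z - c γ| ≤ |φ γ z| + |c γ| := abs_sub _ _
      _ ≤ 2 := by linarith
  have hφint : ∀ γ, Integrable (φ γ) P :=
    fun γ => my_bddInt (hφγm γ).aestronglyMeasurable (C := 1)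
      (fun z => by rw [Real.norm_eq_abs]; exact hφb γ z)
  have hφsq : ∀ γ, ∫ z, (φ γ z) ^ 2 ∂P ≤ 1 := by
    intro γ
    have := (my_sq_int (μ := P) (hφγm γ) zero_le_one (fun z => hφb γ z)).2
    simpa using this
  have hh2 : ∀ γ, ∫ z, (h γ z) ^ 2 ∂P ≤ 1 := by
    intro γ
    have hexp : ∀ z, (h γ z) ^ 2 = (φ γ z) ^ 2 + (-2 * c γ) * φ γ z + (c γ)^2 := by
      intro z; simp only [hhdef]; ring
    have isq : Integrable (fun z => (φ γ z) ^ 2) P :=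
      (my_sq_int (μ := P) (hφγm γ) zero_le_one (fun z => hφb γ z)).1
    have i12 : Integrable (fun z => (φ γ z) ^ 2 + (-2 * c γ) * φ γ z) P :=
      isq.add ((hφint γ).const_mul _)
    have hcc : ∫ z, φ γ z ∂P = c γ := rfl
    calc ∫ z, (h γ z) ^ 2 ∂P
        = ∫ z, ((φ γ z) ^ 2 + (-2 * c γ) * φ γ z + (c γ)^2) ∂P := by simp_rw [hexp]
      _ = ∫ z, (φ γ z) ^ 2 ∂P + (-2 * c γ) * (∫ z, φ γ z ∂P) + (c γ)^2 := by
          rw [integral_add i12 (integrable_const _),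
            integral_add isq ((hφint γ).const_mul _), integral_const_mul, integral_const]
          simp
      _ = ∫ z, (φ γ z) ^ 2 ∂P - (c γ)^2 := by rw [hcc]; ring
      _ ≤ 1 := by have := hφsq γ; nlinarith [sq_nonneg (c γ)]
  -- ψ and Y facts
  have hψb : ∀ z, ‖ψ z‖ ≤ 1 := by
    intro z
    have h1 : ⟪ψ z, ψ z⟫ = ∫ γ, φ γ z * φ γ z ∂p := hκ z z
    have h2 : ∫ γ, φ γ z * φ γ z ∂p ≤ 1 := by
      have := (my_sq_int (μ := p) (hφzm z) zero_le_one (fun γ => hφb γ z)).2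
      calc ∫ γ, φ γ z * φ γ z ∂p = ∫ γ, (φ γ z) ^ 2 ∂p := by
            congr 1; funext γ; rw [sq]
        _ ≤ 1 := by simpa using this
    have h3 : ‖ψ z‖ ^ 2 ≤ 1 := by rw [← real_inner_self_eq_norm_sq, h1]; exact h2
    nlinarith [norm_nonneg (ψ z)]
  set M : H := ∫ w, ψ w ∂P with hMdef
  have hψint : Integrable ψ P := my_bddInt hψm.aestronglyMeasurable (C := 1) hψb
  have hMb : ‖M‖ ≤ 1 := by
    rw [hMdef]
    have h1 : ‖∫ w, ψ w ∂P‖ ≤ 1 * (P Set.univ).toReal :=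
      norm_integral_le_of_norm_le_const (Filter.Eventually.of_forall hψb)
    simpa using h1
  set Y : Z → H := fun z => ψ z - M with hYdef
  have hYrw : ∀ z, ψ z - M = Y z := fun _ => rfl
  simp_rw [hYrw] at hSig ⊢
  have hYm : Measurable Y := hψm.sub measurable_const
  have hYb : ∀ z, ‖Y z‖ ≤ 2 := by
    intro z
    calc ‖Y z‖ = ‖ψ z - M‖ := rfl
      _ ≤ ‖ψ z‖ + ‖M‖ := norm_sub_le _ _
      _ ≤ 2 := by linarith [hψb z, hMb]
  -- the centered kernel identity
  have e1 : ∀ w : Z, ⟪ψ w, M⟫ = ∫ γ, φ γ w * c γ ∂p := by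
    intro w
    rw [hMdef, ← integral_inner hψint (ψ w)]
    simp_rw [hκ w]
    have hm : Measurable (Function.uncurry fun w' γ => φ γ w * φ γ w') :=
      ((hφzm w).comp measurable_snd).mul
        (hφm.comp (measurable_snd.prodMk measurable_fst))
    have hb : ∀ (w' : Z) (γ : Γ₀), |φ γ w * φ γ w'| ≤ 1 := by
      intro w' γ
      rw [abs_mul]
      exact mul_le_one₀ (hφb γ w) (abs_nonneg _) (hφb γ w')
    rw [my_swap (μ := P) (ν := p) hm hb]
    congr 1; funext γ
    rw [integral_const_mul]
  have e2 : ⟪M, M⟫ = ∫ γ, c γ * c γ ∂p := by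
    have h0 : ⟪M, M⟫ = ∫ w, ⟪M, ψ w⟫ ∂P := by
      rw [integral_inner hψint M]
    rw [h0]
    have h1 : ∀ w : Z, ⟪M, ψ w⟫ = ∫ γ, φ γ w * c γ ∂p := by
      intro w; rw [real_inner_comm]; exact e1 w
    simp_rw [h1]
    have hm : Measurable (Function.uncurry fun w γ => φ γ w * c γ) :=
      (hφm.comp (measurable_snd.prodMk measurable_fst)).mul (hcm.comp measurable_snd)
    have hb : ∀ (w : Z) (γ : Γ₀), |φ γ w * c γ| ≤ 1 := by
      intro w γ
      rw [abs_mul]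
      exact mul_le_one₀ (hφb γ w) (abs_nonneg _) (hcb γ)
    rw [my_swap (μ := P) (ν := p) hm hb]
    congr 1; funext γ
    rw [integral_mul_const]
  have hKY : ∀ z z', ⟪Y z, Y z'⟫ = ∫ γ, h γ z * h γ z' ∂p := by
    intro z z'
    have iφφ : Integrable (fun γ => φ γ z * φ γ z') p := by
      refine my_bddInt ((hφzm z).mul (hφzm z')).aestronglyMeasurable (C := 1) (fun γ => ?_)
      rw [Real.norm_eq_abs, abs_mul]
      exact mul_le_one₀ (hφb γ z) (abs_nonneg _) (hφb γ z')
    have iφc : ∀ w : Z, Integrable (fun γ => φ γ w * c γ) p := by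
      intro w
      refine my_bddInt ((hφzm w).mul hcm).aestronglyMeasurable (C := 1) (fun γ => ?_)
      rw [Real.norm_eq_abs, abs_mul]
      exact mul_le_one₀ (hφb γ w) (abs_nonneg _) (hcb γ)
    have icc : Integrable (fun γ => c γ * c γ) p := by
      refine my_bddInt (hcm.mul hcm).aestronglyMeasurable (C := 1) (fun γ => ?_)
      rw [Real.norm_eq_abs, abs_mul]
      exact mul_le_one₀ (hcb γ) (abs_nonneg _) (hcb γ)
    have hrhs : ∫ γ, h γ z * h γ z' ∂p
        = ∫ γ, φ γ z * φ γ z' ∂p - ∫ γ, φ γ z * c γ ∂p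
          - ∫ γ, φ γ z' * c γ ∂p + ∫ γ, c γ * c γ ∂p := by
      have hptw : ∀ γ, h γ z * h γ z'
          = φ γ z * φ γ z' - φ γ z * c γ - φ γ z' * c γ + c γ * c γ := by
        intro γ; simp only [hhdef]; ring
      simp_rw [hptw]
      have i_a : Integrable (fun γ => φ γ z * φ γ z' - φ γ z * c γ) p := iφφ.sub (iφc z)
      have i_b : Integrable (fun γ => φ γ z * φ γ z' - φ γ z * c γ - φ γ z' * c γ) p :=
        i_a.sub (iφc z')
      rw [integral_add i_b icc, integral_sub i_a (iφc z'), integral_sub iφφ (iφc z)]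
    have hlhs : ⟪Y z, Y z'⟫
        = ⟪ψ z, ψ z'⟫ - ⟪ψ z, M⟫ - ⟪ψ z', M⟫ + ⟪M, M⟫ := by
      have : ⟪Y z, Y z'⟫ = ⟪ψ z - M, ψ z' - M⟫ := rfl
      rw [this, inner_sub_left, inner_sub_right, inner_sub_right,
        real_inner_comm M (ψ z')]
      ring
    rw [hlhs, hκ z z', e1 z, e1 z', e2, hrhs]
  have hKYz : ∀ z, ‖Y z‖ ^ 2 = ∫ γ, (h γ z) ^ 2 ∂p := by
    intro z
    rw [← real_inner_self_eq_norm_sq, hKY z z]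
    congr 1; funext γ; rw [sq]
  -- φΓ and X facts
  have hDnn : (0:ℝ) ≤ (D:ℝ) := Nat.cast_nonneg D
  have hDpos : (0:ℝ) < (D:ℝ) := Nat.cast_pos.2 hD
  have hsq2 : ∀ a b : ℝ, ((Real.sqrt D)⁻¹ * a) * ((Real.sqrt D)⁻¹ * b)
      = (D:ℝ)⁻¹ * (a * b) := by
    intro a b
    rw [mul_mul_mul_comm, ← mul_inv, Real.mul_self_sqrt hDnn]
  have hφΓjm : Measurable fun q : (Fin D → Γ₀) × Z => φΓ q.1 q.2 := by
    refine (WithLp.measurable_toLp 2 _).comp (f := fun q : (Fin D → Γ₀) × Z => (φΓ q.1 q.2).ofLp) ?_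
    apply measurable_pi_lambda
    intro s
    have heq : (fun q : (Fin D → Γ₀) × Z => φΓ q.1 q.2 s)
        = fun q => (Real.sqrt D)⁻¹ * φ (q.1 s) q.2 := by
      funext q; exact hφΓ q.1 q.2 s
    rw [heq]
    have hpair : Measurable fun q : (Fin D → Γ₀) × Z => (q.1 s, q.2) :=
      ((measurable_pi_apply s).comp measurable_fst).prodMk measurable_snd
    exact measurable_const.mul (hφm.comp hpair)
  have hφΓpm : ∀ Γ, Measurable (φΓ Γ) := fun Γ => hφΓjm.comp measurable_prodMk_left
  have hφΓb : ∀ Γ z, ‖φΓ Γ z‖ ≤ 1 := by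
    intro Γ z
    rw [EuclideanSpace.norm_eq]
    have hterm : ∀ s : Fin D, ‖φΓ Γ z s‖ ^ 2 ≤ (D:ℝ)⁻¹ := by
      intro s
      have h1 : ‖φΓ Γ z s‖ ≤ (Real.sqrt D)⁻¹ := by
        rw [hφΓ Γ z s, Real.norm_eq_abs, abs_mul,
          abs_of_nonneg (inv_nonneg.2 (Real.sqrt_nonneg _))]
        calc (Real.sqrt D)⁻¹ * |φ (Γ s) z|
            ≤ (Real.sqrt D)⁻¹ * 1 := mul_le_mul_of_nonneg_left (hφb _ _) (by positivity)
          _ = (Real.sqrt D)⁻¹ := mul_one _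
      calc ‖φΓ Γ z s‖ ^ 2 ≤ ((Real.sqrt D)⁻¹) ^ 2 :=
            pow_le_pow_left₀ (norm_nonneg _) h1 2
        _ = (D:ℝ)⁻¹ := by rw [sq]; simpa using hsq2 1 1
    have hsum : ∑ s, ‖φΓ Γ z s‖ ^ 2 ≤ 1 := by
      have : ∑ s, ‖φΓ Γ z s‖ ^ 2 ≤ ∑ _s : Fin D, (D:ℝ)⁻¹ :=
        Finset.sum_le_sum fun s _ => hterm s
      rw [Finset.sum_const, Finset.card_univ] at this
      simpa [nsmul_eq_mul, mul_inv_cancel₀ (ne_of_gt hDpos)] using this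
    calc Real.sqrt (∑ s, ‖φΓ Γ z s‖ ^ 2) ≤ Real.sqrt 1 := Real.sqrt_le_sqrt hsum
      _ = 1 := Real.sqrt_one
  have hφΓint : ∀ Γ, Integrable (φΓ Γ) P :=
    fun Γ => my_bddInt (hφΓpm Γ).aestronglyMeasurable (C := 1) (hφΓb Γ)
  set mG : (Fin D → Γ₀) → EuclideanSpace ℝ (Fin D) := fun Γ => ∫ w, φΓ Γ w ∂P
    with hmGdef
  have hmGrw : ∀ Γ, (∫ w, φΓ Γ w ∂P) = mG Γ := fun _ => rfl
  simp_rw [hmGrw] at hG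
  set X : (Fin D → Γ₀) → Z → EuclideanSpace ℝ (Fin D) := fun Γ z => φΓ Γ z - mG Γ
    with hXdef
  have hXrw : ∀ Γ z, φΓ Γ z - mG Γ = X Γ z := fun _ _ => rfl
  simp_rw [hXrw] at hG
  have hmGm : Measurable mG := hφΓjm.stronglyMeasurable.integral_prod_right'.measurable
  have hmGb : ∀ Γ, ‖mG Γ‖ ≤ 1 := by
    intro Γ
    have h1 : ‖∫ w, φΓ Γ w ∂P‖ ≤ 1 * (P Set.univ).toReal :=
      norm_integral_le_of_norm_le_const (Filter.Eventually.of_forall (hφΓb Γ))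
    simpa using h1
  have hXjm : Measurable fun q : (Fin D → Γ₀) × Z => X q.1 q.2 :=
    hφΓjm.sub (hmGm.comp measurable_fst)
  have hXpm : ∀ Γ, Measurable (X Γ) := fun Γ => hXjm.comp measurable_prodMk_left
  have hXb : ∀ Γ z, ‖X Γ z‖ ≤ 2 := by
    intro Γ z
    calc ‖X Γ z‖ = ‖φΓ Γ z - mG Γ‖ := rfl
      _ ≤ ‖φΓ Γ z‖ + ‖mG Γ‖ := norm_sub_le _ _
      _ ≤ 2 := by linarith [hφΓb Γ z, hmGb Γ]
  have hXcoord : ∀ Γ z s, X Γ z s = (Real.sqrt D)⁻¹ * h (Γ s) z := by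
    intro Γ z s
    have hms : mG Γ s = (Real.sqrt D)⁻¹ * c (Γ s) := by
      have h1 := (EuclideanSpace.proj (𝕜 := ℝ) s).integral_comp_comm (hφΓint Γ)
      simp only [PiLp.proj_apply] at h1
      have h2 : mG Γ s = ∫ w, φΓ Γ w s ∂P := h1.symm
      rw [h2]
      simp_rw [hφΓ]
      rw [integral_const_mul]
    have h3 : X Γ z s = φΓ Γ z s - mG Γ s := rfl
    rw [h3, hφΓ Γ z s, hms]
    simp only [hhdef]
    ring
  have hKX : ∀ Γ z z', ⟪X Γ z, X Γ z'⟫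
      = (D:ℝ)⁻¹ * ∑ s, h (Γ s) z * h (Γ s) z' := by
    intro Γ z z'
    have h0 : ⟪X Γ z, X Γ z'⟫ = ∑ s, X Γ z s * X Γ z' s := by
      rw [PiLp.inner_apply]; exact Finset.sum_congr rfl fun i _ => by simp [mul_comm]
    rw [h0]
    have h1 : ∀ s : Fin D, X Γ z s * X Γ z' s
        = (D:ℝ)⁻¹ * (h (Γ s) z * h (Γ s) z') := by
      intro s; rw [hXcoord, hXcoord, hsq2]
    simp_rw [h1]
    rw [← Finset.mul_sum]
  have hhzint : ∀ z z', Integrable (fun γ => h γ z * h γ z') p := by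
    intro z z'
    refine my_bddInt ((hhzm z).mul (hhzm z')).aestronglyMeasurable (C := 4) (fun γ => ?_)
    rw [Real.norm_eq_abs, abs_mul]
    calc |h γ z| * |h γ z'| ≤ 2 * 2 :=
          mul_le_mul (hhb γ z) (hhb γ z') (abs_nonneg _) (by norm_num)
      _ = 4 := by norm_num
  have hKmean : ∀ z z', ∫ Γ, ⟪X Γ z, X Γ z'⟫ ∂pD = ⟪Y z, Y z'⟫ := by
    intro z z'
    simp_rw [hKX]
    rw [integral_const_mul]
    have h1 : ∀ s : Fin D, Integrable (fun Γ : Fin D → Γ₀ => h (Γ s) z * h (Γ s) z') pD := by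
      intro s
      refine my_bddInt (C := 4) ?_ (fun Γ => ?_)
      · exact (((hhzm z).comp (measurable_pi_apply s)).mul
          ((hhzm z').comp (measurable_pi_apply s))).aestronglyMeasurable
      · rw [Real.norm_eq_abs, abs_mul]
        calc |h (Γ s) z| * |h (Γ s) z'| ≤ 2 * 2 :=
              mul_le_mul (hhb _ z) (hhb _ z') (abs_nonneg _) (by norm_num)
          _ = 4 := by norm_num
    rw [integral_finset_sum _ (fun s _ => h1 s)]
    have h2 : ∀ s : Fin D, ∫ Γ, h (Γ s) z * h (Γ s) z' ∂pD
        = ∫ γ, h γ z * h γ z' ∂p := by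
      intro s
      rw [hpD]
      exact my_marg1 p (fun γ => h γ z * h γ z') s
    simp_rw [h2]
    rw [Finset.sum_const, Finset.card_univ]
    simp only [Fintype.card_fin, nsmul_eq_mul]
    rw [← mul_assoc, inv_mul_cancel₀ (ne_of_gt hDpos), one_mul, hKY]
  have hvar : ∀ z z', ∫ Γ, (⟪X Γ z, X Γ z'⟫ - ⟪Y z, Y z'⟫) ^ 2 ∂pD
      ≤ (D:ℝ)⁻¹ * ∫ γ, (h γ z * h γ z') ^ 2 ∂p := by
    intro z z'
    simp_rw [hKX, hKY]
    have hmv : Measurable fun γ => h γ z * h γ z' := (hhzm z).mul (hhzm z')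
    have hbv : ∀ γ, |h γ z * h γ z'| ≤ 4 := by
      intro γ
      rw [abs_mul]
      calc |h γ z| * |h γ z'| ≤ 2 * 2 :=
            mul_le_mul (hhb γ z) (hhb γ z') (abs_nonneg _) (by norm_num)
        _ = 4 := by norm_num
    have := my_var p hD (a := fun γ => h γ z * h γ z') hmv (by norm_num : (0:ℝ) ≤ 4) hbv
    rw [← hpD] at this
    exact this
  -- norm of G measurable and bounded
  have two0 : (0:ℝ) ≤ 2 := by norm_num
  obtain ⟨e, heb, hesup⟩ := my_norm_sup (E := EuclideanSpace ℝ (Fin D))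
  have hGvm : ∀ v : EuclideanSpace ℝ (Fin D), Measurable fun Γ => G Γ v := by
    intro v
    have h0 : Measurable fun q : (Fin D → Γ₀) × Z =>
        (⟪v, X q.1 q.2⟫ : ℝ) • X q.1 q.2 :=
      (Measurable.inner (𝕜 := ℝ) measurable_const hXjm).smul hXjm
    have h1 : StronglyMeasurable fun Γ => ∫ z, (⟪v, X Γ z⟫ : ℝ) • X Γ z ∂P :=
      h0.stronglyMeasurable.integral_prod_right'
    have h2 : (fun Γ => G Γ v) = fun Γ => ∫ z, (⟪v, X Γ z⟫ : ℝ) • X Γ z ∂P :=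
      funext fun Γ => hG Γ v
    rw [h2]
    exact h1.measurable
  have hGnm : Measurable fun Γ => ‖G Γ‖ := by
    have h2 : (fun Γ => ‖G Γ‖) = fun Γ => ⨆ n, ‖G Γ (e n)‖ :=
      funext fun Γ => hesup (G Γ)
    rw [h2]
    exact Measurable.iSup fun n => (hGvm (e n)).norm
  have hGb : ∀ Γ, ‖G Γ‖ ≤ 4 := by
    intro Γ
    refine (G Γ).opNorm_le_bound (by norm_num) fun v => ?_
    rw [hG Γ v]
    have hb : ∀ z, ‖(⟪v, X Γ z⟫ : ℝ) • X Γ z‖ ≤ 4 * ‖v‖ := by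
      intro z
      rw [norm_smul, Real.norm_eq_abs]
      calc |⟪v, X Γ z⟫| * ‖X Γ z‖ ≤ (‖v‖ * 2) * 2 :=
            mul_le_mul (my_inner_bd (hXb Γ) v z) (hXb Γ z) (norm_nonneg _)
              (by positivity)
        _ = 4 * ‖v‖ := by ring
    have h1 : ‖∫ z, (⟪v, X Γ z⟫ : ℝ) • X Γ z ∂P‖ ≤ (4 * ‖v‖) * (P Set.univ).toReal :=
      norm_integral_le_of_norm_le_const (Filter.Eventually.of_forall hb)
    simpa using h1
  have hGint : Integrable (fun Γ => ‖G Γ‖) pD :=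
    my_bddInt hGnm.aestronglyMeasurable (C := 4) (fun Γ => by
      rw [norm_norm]; exact hGb Γ)
  set I := ∫ Γ, ‖G Γ‖ ∂pD with hIdef
  have hI0 : 0 ≤ I := integral_nonneg fun Γ => norm_nonneg _
  -- LOWER BOUND
  have hlower : ‖Sig‖ ≤ I := by
    have hnormv : ∀ v : H, ‖Sig v‖ ≤ I * ‖v‖ := by
      intro v
      have hfm : Measurable fun z => (⟪v, Y z⟫ : ℝ) := measurable_const.inner hYm
      have hfb : ∀ z, |(⟪v, Y z⟫ : ℝ)| ≤ ‖v‖ * 2 := my_inner_bd hYb v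
      have hfb0 : (0:ℝ) ≤ ‖v‖ * 2 := by positivity
      have hQfY : ‖Sig v‖ ^ 2 = ∫ q : Z × Z,
          ((⟪v, Y q.1⟫ : ℝ) * ⟪v, Y q.2⟫) * ⟪Y q.1, Y q.2⟫ ∂(P.prod P) := by
        rw [hSig v]
        exact my_expand2 hYm two0 hYb hfm hfb0 hfb
      have hQfX : ∀ Γ, ‖∫ z, (⟪v, Y z⟫ : ℝ) • X Γ z ∂P‖ ^ 2 = ∫ q : Z × Z,
          ((⟪v, Y q.1⟫ : ℝ) * ⟪v, Y q.2⟫) * ⟪X Γ q.1, X Γ q.2⟫ ∂(P.prod P) :=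
        fun Γ => my_expand2 (hXpm Γ) two0 (hXb Γ) hfm hfb0 hfb
      have hjm : Measurable (Function.uncurry fun (Γ : Fin D → Γ₀) (q : Z × Z) =>
          ((⟪v, Y q.1⟫ : ℝ) * ⟪v, Y q.2⟫) * ⟪X Γ q.1, X Γ q.2⟫) := by
        apply Measurable.mul
        · exact ((hfm.comp (measurable_fst.comp measurable_snd)).mul
            (hfm.comp (measurable_snd.comp measurable_snd)))
        · have hx1 : Measurable fun r : (Fin D → Γ₀) × (Z × Z) => X r.1 r.2.1 :=
            hXjm.comp (measurable_fst.prodMk (measurable_fst.comp measurable_snd))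
          have hx2 : Measurable fun r : (Fin D → Γ₀) × (Z × Z) => X r.1 r.2.2 :=
            hXjm.comp (measurable_fst.prodMk (measurable_snd.comp measurable_snd))
          exact hx1.inner hx2
      have hjb : ∀ (Γ : Fin D → Γ₀) (q : Z × Z),
          |((⟪v, Y q.1⟫ : ℝ) * ⟪v, Y q.2⟫) * ⟪X Γ q.1, X Γ q.2⟫|
            ≤ (‖v‖ * 2) * (‖v‖ * 2) * 4 := by
        intro Γ q
        rw [abs_mul, abs_mul]
        refine mul_le_mul (mul_le_mul (hfb q.1) (hfb q.2) (abs_nonneg _) hfb0) ?_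
          (abs_nonneg _) (by positivity)
        calc |⟪X Γ q.1, X Γ q.2⟫| ≤ ‖X Γ q.1‖ * ‖X Γ q.2‖ := abs_real_inner_le_norm _ _
          _ ≤ 2 * 2 := mul_le_mul (hXb Γ q.1) (hXb Γ q.2) (norm_nonneg _) two0
          _ = 4 := by norm_num
      have hpoint : ∀ q : Z × Z,
          ∫ Γ, ((⟪v, Y q.1⟫ : ℝ) * ⟪v, Y q.2⟫) * ⟪X Γ q.1, X Γ q.2⟫ ∂pD
            = ((⟪v, Y q.1⟫ : ℝ) * ⟪v, Y q.2⟫) * ⟪Y q.1, Y q.2⟫ := by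
        intro q
        rw [integral_const_mul, hKmean]
      have key : ‖Sig v‖ ^ 2
          = ∫ Γ, ‖∫ z, (⟪v, Y z⟫ : ℝ) • X Γ z ∂P‖ ^ 2 ∂pD := by
        have hs : ∫ Γ, (∫ q : Z × Z,
            ((⟪v, Y q.1⟫ : ℝ) * ⟪v, Y q.2⟫) * ⟪X Γ q.1, X Γ q.2⟫ ∂(P.prod P)) ∂pD
            = ∫ q : Z × Z, (∫ Γ, ((⟪v, Y q.1⟫ : ℝ) * ⟪v, Y q.2⟫)
                * ⟪X Γ q.1, X Γ q.2⟫ ∂pD) ∂(P.prod P) :=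
          my_swap hjm hjb
        rw [hQfY]
        simp_rw [hQfX]
        rw [hs]
        refine (integral_congr_ae (Filter.Eventually.of_forall fun q => ?_)).symm
        exact hpoint q
      have hmono : ∫ Γ, ‖∫ z, (⟪v, Y z⟫ : ℝ) • X Γ z ∂P‖ ^ 2 ∂pD
          ≤ ∫ Γ, ‖G Γ‖ * (∫ z, (⟪v, Y z⟫ : ℝ) ^ 2 ∂P) ∂pD := by
        refine integral_mono_of_nonneg (Filter.Eventually.of_forall fun Γ => sq_nonneg _)
          (hGint.mul_const _) (Filter.Eventually.of_forall fun Γ => ?_)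
        exact my_covQ (hXpm Γ).aestronglyMeasurable two0 (hXb Γ) (G Γ) (hG Γ)
          hfm.aestronglyMeasurable hfb0 hfb
      have hImul : ∫ Γ, ‖G Γ‖ * (∫ z, (⟪v, Y z⟫ : ℝ) ^ 2 ∂P) ∂pD
          = I * ∫ z, (⟪v, Y z⟫ : ℝ) ^ 2 ∂P := by
        rw [integral_mul_const, hIdef]
      have hfsq : ∫ z, (⟪v, Y z⟫ : ℝ) ^ 2 ∂P = ⟪v, Sig v⟫ :=
        (my_quad hYm.aestronglyMeasurable two0 hYb Sig hSig v).symm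
      have hinle : (⟪v, Sig v⟫ : ℝ) ≤ ‖v‖ * ‖Sig v‖ := real_inner_le_norm v (Sig v)
      have hchain : ‖Sig v‖ ^ 2 ≤ I * (‖v‖ * ‖Sig v‖) := by
        calc ‖Sig v‖ ^ 2 = ∫ Γ, ‖∫ z, (⟪v, Y z⟫ : ℝ) • X Γ z ∂P‖ ^ 2 ∂pD := key
          _ ≤ I * ∫ z, (⟪v, Y z⟫ : ℝ) ^ 2 ∂P := by rw [← hImul]; exact hmono
          _ = I * ⟪v, Sig v⟫ := by rw [hfsq]
          _ ≤ I * (‖v‖ * ‖Sig v‖) := mul_le_mul_of_nonneg_left hinle hI0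
      rcases eq_or_lt_of_le (norm_nonneg (Sig v)) with h0 | h0
      · rw [← h0]; positivity
      · nlinarith
    exact Sig.opNorm_le_bound hI0 hnormv
  -- UPPER BOUND
  set R : (Fin D → Γ₀) → ℝ := fun Γ =>
    Real.sqrt (∫ q : Z × Z, (⟪X Γ q.1, X Γ q.2⟫ - ⟪Y q.1, Y q.2⟫) ^ 2 ∂(P.prod P))
    with hRdef
  have hYYm : Measurable fun q : Z × Z => (⟪Y q.1, Y q.2⟫ : ℝ) :=
    (hYm.comp measurable_fst).inner (hYm.comp measurable_snd)
  have hXXpm : ∀ Γ, Measurable fun q : Z × Z => (⟪X Γ q.1, X Γ q.2⟫ : ℝ) :=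
    fun Γ => ((hXpm Γ).comp measurable_fst).inner ((hXpm Γ).comp measurable_snd)
  have hYYb : ∀ q : Z × Z, |(⟪Y q.1, Y q.2⟫ : ℝ)| ≤ 4 := by
    intro q
    calc |(⟪Y q.1, Y q.2⟫ : ℝ)| ≤ ‖Y q.1‖ * ‖Y q.2‖ := abs_real_inner_le_norm _ _
      _ ≤ 2 * 2 := mul_le_mul (hYb q.1) (hYb q.2) (norm_nonneg _) two0
      _ = 4 := by norm_num
  have hXXb : ∀ Γ (q : Z × Z), |(⟪X Γ q.1, X Γ q.2⟫ : ℝ)| ≤ 4 := by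
    intro Γ q
    calc |(⟪X Γ q.1, X Γ q.2⟫ : ℝ)| ≤ ‖X Γ q.1‖ * ‖X Γ q.2‖ := abs_real_inner_le_norm _ _
      _ ≤ 2 * 2 := mul_le_mul (hXb Γ q.1) (hXb Γ q.2) (norm_nonneg _) two0
      _ = 4 := by norm_num
  have hΔb : ∀ Γ (q : Z × Z), |(⟪X Γ q.1, X Γ q.2⟫ : ℝ) - ⟪Y q.1, Y q.2⟫| ≤ 8 := by
    intro Γ q
    calc |(⟪X Γ q.1, X Γ q.2⟫ : ℝ) - ⟪Y q.1, Y q.2⟫|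
        ≤ |(⟪X Γ q.1, X Γ q.2⟫ : ℝ)| + |(⟪Y q.1, Y q.2⟫ : ℝ)| := abs_sub _ _
      _ ≤ 8 := by linarith [hXXb Γ q, hYYb q]
  have hRnn : ∀ Γ, 0 ≤ R Γ := fun Γ => Real.sqrt_nonneg _
  have hΔint_nonneg : ∀ Γ, 0 ≤ ∫ q : Z × Z,
      (⟪X Γ q.1, X Γ q.2⟫ - ⟪Y q.1, Y q.2⟫) ^ 2 ∂(P.prod P) :=
    fun Γ => integral_nonneg fun q => sq_nonneg _
  have hRsq : ∀ Γ, (R Γ) ^ 2 = ∫ q : Z × Z,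
      (⟪X Γ q.1, X Γ q.2⟫ - ⟪Y q.1, Y q.2⟫) ^ 2 ∂(P.prod P) :=
    fun Γ => Real.sq_sqrt (hΔint_nonneg Γ)
  -- G Γ bounded by ‖Sig‖ + R Γ
  have hGR : ∀ Γ, ‖G Γ‖ ≤ ‖Sig‖ + R Γ := by
    intro Γ
    have hBnn : (0:ℝ) ≤ ‖Sig‖ + R Γ := add_nonneg (norm_nonneg _) (hRnn Γ)
    refine my_opbd (hXpm Γ).aestronglyMeasurable two0 (hXb Γ) (G Γ) (hG Γ) hBnn ?_
    intro u
    have hgm : Measurable fun z => (⟪u, X Γ z⟫ : ℝ) := measurable_const.inner (hXpm Γ)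
    have hgb : ∀ z, |(⟪u, X Γ z⟫ : ℝ)| ≤ ‖u‖ * 2 := my_inner_bd (hXb Γ) u
    have hgb0 : (0:ℝ) ≤ ‖u‖ * 2 := by positivity
    set A := ∫ z, (⟪u, X Γ z⟫ : ℝ) ^ 2 ∂P with hAdef
    have hA0 : 0 ≤ A := integral_nonneg fun z => sq_nonneg _
    have hAq : A = ⟪u, G Γ u⟫ :=
      (my_quad (hXpm Γ).aestronglyMeasurable two0 (hXb Γ) (G Γ) (hG Γ) u).symm
    have hGu : ‖G Γ u‖ ^ 2 = ∫ q : Z × Z,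
        ((⟪u, X Γ q.1⟫ : ℝ) * ⟪u, X Γ q.2⟫) * ⟪X Γ q.1, X Γ q.2⟫ ∂(P.prod P) := by
      rw [hG Γ u]
      exact my_expand2 (hXpm Γ) two0 (hXb Γ) hgm hgb0 hgb
    have hggm : Measurable fun q : Z × Z => (⟪u, X Γ q.1⟫ : ℝ) * ⟪u, X Γ q.2⟫ :=
      (hgm.comp measurable_fst).mul (hgm.comp measurable_snd)
    have hggb : ∀ q : Z × Z, |(⟪u, X Γ q.1⟫ : ℝ) * ⟪u, X Γ q.2⟫| ≤ (‖u‖ * 2) * (‖u‖ * 2) := by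
      intro q
      rw [abs_mul]
      exact mul_le_mul (hgb q.1) (hgb q.2) (abs_nonneg _) hgb0
    have int1 : Integrable (fun q : Z × Z =>
        ((⟪u, X Γ q.1⟫ : ℝ) * ⟪u, X Γ q.2⟫) * ⟪Y q.1, Y q.2⟫) (P.prod P) := by
      refine my_bddInt (hggm.mul hYYm).aestronglyMeasurable
        (C := (‖u‖ * 2) * (‖u‖ * 2) * 4) (fun q => ?_)
      rw [Real.norm_eq_abs, abs_mul]
      exact mul_le_mul (hggb q) (hYYb q) (abs_nonneg _) (by positivity)
    have int2 : Integrable (fun q : Z × Z =>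
        ((⟪u, X Γ q.1⟫ : ℝ) * ⟪u, X Γ q.2⟫)
          * (⟪X Γ q.1, X Γ q.2⟫ - ⟪Y q.1, Y q.2⟫)) (P.prod P) := by
      refine my_bddInt (hggm.mul ((hXXpm Γ).sub hYYm)).aestronglyMeasurable
        (C := (‖u‖ * 2) * (‖u‖ * 2) * 8) (fun q => ?_)
      rw [Real.norm_eq_abs, abs_mul]
      exact mul_le_mul (hggb q) (hΔb Γ q) (abs_nonneg _) (by positivity)
    have hsplit : ∫ q : Z × Z,
        ((⟪u, X Γ q.1⟫ : ℝ) * ⟪u, X Γ q.2⟫) * ⟪X Γ q.1, X Γ q.2⟫ ∂(P.prod P)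
        = (∫ q : Z × Z, ((⟪u, X Γ q.1⟫ : ℝ) * ⟪u, X Γ q.2⟫) * ⟪Y q.1, Y q.2⟫ ∂(P.prod P))
          + ∫ q : Z × Z, ((⟪u, X Γ q.1⟫ : ℝ) * ⟪u, X Γ q.2⟫)
              * (⟪X Γ q.1, X Γ q.2⟫ - ⟪Y q.1, Y q.2⟫) ∂(P.prod P) := by
      rw [← integral_add int1 int2]
      congr 1; funext q; ring
    have hT1 : ∫ q : Z × Z,
        ((⟪u, X Γ q.1⟫ : ℝ) * ⟪u, X Γ q.2⟫) * ⟪Y q.1, Y q.2⟫ ∂(P.prod P)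
          ≤ ‖Sig‖ * A := by
      have e := (my_expand2 (P := P) hYm two0 hYb hgm hgb0 hgb).symm
      rw [e]
      exact my_covQ hYm.aestronglyMeasurable two0 hYb Sig hSig
        hgm.aestronglyMeasurable hgb0 hgb
    have hT2 : ∫ q : Z × Z, ((⟪u, X Γ q.1⟫ : ℝ) * ⟪u, X Γ q.2⟫)
        * (⟪X Γ q.1, X Γ q.2⟫ - ⟪Y q.1, Y q.2⟫) ∂(P.prod P) ≤ A * R Γ := by
      have hcs := my_cs (μ := P.prod P)
        (f := fun q : Z × Z => (⟪u, X Γ q.1⟫ : ℝ) * ⟪u, X Γ q.2⟫)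
        (g := fun q : Z × Z => (⟪X Γ q.1, X Γ q.2⟫ : ℝ) - ⟪Y q.1, Y q.2⟫)
        hggm.aestronglyMeasurable ((hXXpm Γ).sub hYYm).aestronglyMeasurable
        (Cf := (‖u‖ * 2) * (‖u‖ * 2)) (Cg := 8) (by positivity) (by norm_num)
        hggb (hΔb Γ)
      have hprod : ∫ q : Z × Z, ((⟪u, X Γ q.1⟫ : ℝ) * ⟪u, X Γ q.2⟫) ^ 2 ∂(P.prod P)
          = A * A := by
        have hptw : ∀ q : Z × Z, ((⟪u, X Γ q.1⟫ : ℝ) * ⟪u, X Γ q.2⟫) ^ 2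
            = (⟪u, X Γ q.1⟫ : ℝ) ^ 2 * (⟪u, X Γ q.2⟫ : ℝ) ^ 2 := fun q => by ring
        simp_rw [hptw]
        rw [integral_prod_mul (f := fun z => (⟪u, X Γ z⟫ : ℝ) ^ 2)
          (g := fun z => (⟪u, X Γ z⟫ : ℝ) ^ 2)]
      calc ∫ q : Z × Z, ((⟪u, X Γ q.1⟫ : ℝ) * ⟪u, X Γ q.2⟫)
            * (⟪X Γ q.1, X Γ q.2⟫ - ⟪Y q.1, Y q.2⟫) ∂(P.prod P)
          ≤ Real.sqrt (∫ q : Z × Z, ((⟪u, X Γ q.1⟫ : ℝ) * ⟪u, X Γ q.2⟫) ^ 2 ∂(P.prod P))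
            * Real.sqrt (∫ q : Z × Z,
              ((⟪X Γ q.1, X Γ q.2⟫ : ℝ) - ⟪Y q.1, Y q.2⟫) ^ 2 ∂(P.prod P)) := hcs
        _ = A * R Γ := by rw [hprod, Real.sqrt_mul_self hA0, hRdef]
    have hGu2 : ‖G Γ u‖ ^ 2 ≤ ‖Sig‖ * A + A * R Γ := by
      rw [hGu, hsplit]
      exact add_le_add hT1 hT2
    have hAle : A ≤ ‖u‖ * ‖G Γ u‖ := by
      rw [hAq]; exact real_inner_le_norm u (G Γ u)
    have hA2 : A ^ 2 ≤ ‖u‖ ^ 2 * (‖Sig‖ * A + A * R Γ) := by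
      calc A ^ 2 ≤ (‖u‖ * ‖G Γ u‖) ^ 2 := pow_le_pow_left₀ hA0 hAle 2
        _ = ‖u‖ ^ 2 * ‖G Γ u‖ ^ 2 := by ring
        _ ≤ ‖u‖ ^ 2 * (‖Sig‖ * A + A * R Γ) :=
            mul_le_mul_of_nonneg_left hGu2 (sq_nonneg _)
    rcases eq_or_lt_of_le hA0 with h0 | h0
    · rw [← h0]
      exact mul_nonneg hBnn (sq_nonneg _)
    · nlinarith
  -- integrability and measurability of R
  have hΔpm2 : Measurable (Function.uncurry fun (Γ : Fin D → Γ₀) (q : Z × Z) =>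
      ((⟪X Γ q.1, X Γ q.2⟫ : ℝ) - ⟪Y q.1, Y q.2⟫) ^ 2) := by
    apply Measurable.pow_const
    have hx1 : Measurable fun r : (Fin D → Γ₀) × (Z × Z) => X r.1 r.2.1 :=
      hXjm.comp (measurable_fst.prodMk (measurable_fst.comp measurable_snd))
    have hx2 : Measurable fun r : (Fin D → Γ₀) × (Z × Z) => X r.1 r.2.2 :=
      hXjm.comp (measurable_fst.prodMk (measurable_snd.comp measurable_snd))
    exact (hx1.inner hx2).sub
      (((hYm.comp (measurable_fst.comp measurable_snd)).inner
        (hYm.comp (measurable_snd.comp measurable_snd))))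
  have hΔsqb : ∀ (Γ : Fin D → Γ₀) (q : Z × Z),
      |((⟪X Γ q.1, X Γ q.2⟫ : ℝ) - ⟪Y q.1, Y q.2⟫) ^ 2| ≤ 64 := by
    intro Γ q
    rw [abs_of_nonneg (sq_nonneg _), ← sq_abs]
    calc |(⟪X Γ q.1, X Γ q.2⟫ : ℝ) - ⟪Y q.1, Y q.2⟫| ^ 2 ≤ 8 ^ 2 :=
          pow_le_pow_left₀ (abs_nonneg _) (hΔb Γ q) 2
      _ = 64 := by norm_num
  have hRm : Measurable R := by
    apply Measurable.comp Real.continuous_sqrt.measurable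
    exact hΔpm2.stronglyMeasurable.integral_prod_right'.measurable
  have hRb : ∀ Γ, R Γ ≤ 8 := by
    intro Γ
    have h1 : ∫ q : Z × Z, (⟪X Γ q.1, X Γ q.2⟫ - ⟪Y q.1, Y q.2⟫) ^ 2 ∂(P.prod P) ≤ 64 := by
      have hint : Integrable (fun q : Z × Z =>
          (⟪X Γ q.1, X Γ q.2⟫ - ⟪Y q.1, Y q.2⟫) ^ 2) (P.prod P) := by
        refine my_bddInt (C := 64) ?_ (fun q => by
          rw [Real.norm_eq_abs]; exact hΔsqb Γ q)
        exact (((hXXpm Γ).sub hYYm).pow_const 2).aestronglyMeasurable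
      calc ∫ q : Z × Z, (⟪X Γ q.1, X Γ q.2⟫ - ⟪Y q.1, Y q.2⟫) ^ 2 ∂(P.prod P)
          ≤ ∫ _q : Z × Z, (64:ℝ) ∂(P.prod P) :=
            integral_mono hint (integrable_const _) (fun q => le_of_abs_le (hΔsqb Γ q))
        _ = 64 := by rw [integral_const]; simp
    calc R Γ ≤ Real.sqrt 64 := Real.sqrt_le_sqrt h1
      _ = 8 := by
          rw [show (64:ℝ) = 8 ^ 2 by norm_num, Real.sqrt_sq (by norm_num : (0:ℝ) ≤ 8)]
  have hRint : Integrable R pD :=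
    my_bddInt hRm.aestronglyMeasurable (C := 8) (fun Γ => by
      rw [Real.norm_eq_abs, abs_of_nonneg (hRnn Γ)]; exact hRb Γ)
  -- expectation of R
  have key2 : I ≤ ‖Sig‖ + ∫ Γ, R Γ ∂pD := by
    have h1 : I ≤ ∫ Γ, (‖Sig‖ + R Γ) ∂pD := by
      rw [hIdef]
      exact integral_mono hGint ((integrable_const _).add hRint) hGR
    have h2 : ∫ Γ, (‖Sig‖ + R Γ) ∂pD = ‖Sig‖ + ∫ Γ, R Γ ∂pD := by
      rw [integral_add (integrable_const _) hRint, integral_const]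
      simp
    linarith [h1, h2.symm.le, h2.le]
  have key3 : ∫ Γ, R Γ ∂pD ≤ Real.sqrt (∫ Γ, (∫ q : Z × Z,
      (⟪X Γ q.1, X Γ q.2⟫ - ⟪Y q.1, Y q.2⟫) ^ 2 ∂(P.prod P)) ∂pD) := by
    have hcs := my_cs (μ := pD) (f := R) (g := fun _ => (1:ℝ))
      hRm.aestronglyMeasurable aestronglyMeasurable_const
      (Cf := 8) (Cg := 1) (by norm_num) zero_le_one
      (fun Γ => by rw [abs_of_nonneg (hRnn Γ)]; exact hRb Γ)
      (fun _ => by norm_num)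
    simp only [mul_one, one_pow] at hcs
    have h1 : ∫ _Γ : Fin D → Γ₀, (1:ℝ) ∂pD = 1 := by rw [integral_const]; simp
    rw [h1, Real.sqrt_one, mul_one] at hcs
    have h2 : ∫ Γ, (R Γ) ^ 2 ∂pD = ∫ Γ, (∫ q : Z × Z,
        (⟪X Γ q.1, X Γ q.2⟫ - ⟪Y q.1, Y q.2⟫) ^ 2 ∂(P.prod P)) ∂pD :=
      integral_congr_ae (Filter.Eventually.of_forall fun Γ => hRsq Γ)
    rw [h2] at hcs
    exact hcs
  -- the variance chain
  have hhsqjm : Measurable (Function.uncurry fun (q : Z × Z) (γ : Γ₀) =>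
      (h γ q.1 * h γ q.2) ^ 2) := by
    apply Measurable.pow_const
    exact ((hhjm.comp (measurable_snd.prodMk (measurable_fst.comp measurable_fst))).mul
      (hhjm.comp (measurable_snd.prodMk (measurable_snd.comp measurable_fst))))
  have hhsqb : ∀ (q : Z × Z) (γ : Γ₀), |(h γ q.1 * h γ q.2) ^ 2| ≤ 16 := by
    intro q γ
    rw [abs_of_nonneg (sq_nonneg _), ← sq_abs, abs_mul]
    calc (|h γ q.1| * |h γ q.2|) ^ 2 ≤ (2 * 2) ^ 2 := by
          refine pow_le_pow_left₀ (by positivity) ?_ 2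
          exact mul_le_mul (hhb γ q.1) (hhb γ q.2) (abs_nonneg _) two0
      _ = 16 := by norm_num
  have hinm : Measurable fun q : Z × Z => ∫ γ, (h γ q.1 * h γ q.2) ^ 2 ∂p :=
    hhsqjm.stronglyMeasurable.integral_prod_right'.measurable
  have hinb : ∀ q : Z × Z, |∫ γ, (h γ q.1 * h γ q.2) ^ 2 ∂p| ≤ 16 := by
    intro q
    have h1 : ‖∫ γ, (h γ q.1 * h γ q.2) ^ 2 ∂p‖ ≤ 16 * (p Set.univ).toReal :=
      norm_integral_le_of_norm_le_const (Filter.Eventually.of_forall fun γ => by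
        rw [Real.norm_eq_abs]; exact hhsqb q γ)
    simpa using h1
  have key4 : ∫ Γ, (∫ q : Z × Z,
      (⟪X Γ q.1, X Γ q.2⟫ - ⟪Y q.1, Y q.2⟫) ^ 2 ∂(P.prod P)) ∂pD
      ≤ (∫ z, ‖Y z‖ ^ 2 ∂P) / D := by
    have swap1 : ∫ Γ, (∫ q : Z × Z,
        (⟪X Γ q.1, X Γ q.2⟫ - ⟪Y q.1, Y q.2⟫) ^ 2 ∂(P.prod P)) ∂pD
        = ∫ q : Z × Z, (∫ Γ,
          (⟪X Γ q.1, X Γ q.2⟫ - ⟪Y q.1, Y q.2⟫) ^ 2 ∂pD) ∂(P.prod P) :=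
      my_swap hΔpm2 hΔsqb
    have hstep1 : ∫ q : Z × Z, (∫ Γ,
        (⟪X Γ q.1, X Γ q.2⟫ - ⟪Y q.1, Y q.2⟫) ^ 2 ∂pD) ∂(P.prod P)
        ≤ ∫ q : Z × Z, (D:ℝ)⁻¹ * ∫ γ, (h γ q.1 * h γ q.2) ^ 2 ∂p ∂(P.prod P) := by
      refine integral_mono_of_nonneg
        (Filter.Eventually.of_forall fun q => integral_nonneg fun Γ => sq_nonneg _)
        ((my_bddInt hinm.aestronglyMeasurable (C := 16) (fun q => by
          rw [Real.norm_eq_abs]; exact hinb q)).const_mul _)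
        (Filter.Eventually.of_forall fun q => hvar q.1 q.2)
    have hstep2 : ∫ q : Z × Z, (D:ℝ)⁻¹ * ∫ γ, (h γ q.1 * h γ q.2) ^ 2 ∂p ∂(P.prod P)
        = (D:ℝ)⁻¹ * ∫ q : Z × Z, (∫ γ, (h γ q.1 * h γ q.2) ^ 2 ∂p) ∂(P.prod P) :=
      integral_const_mul _ _
    have hstep3 : ∫ q : Z × Z, (∫ γ, (h γ q.1 * h γ q.2) ^ 2 ∂p) ∂(P.prod P)
        = ∫ γ, (∫ q : Z × Z, (h γ q.1 * h γ q.2) ^ 2 ∂(P.prod P)) ∂p :=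
      my_swap hhsqjm hhsqb
    have hstep4 : ∀ γ, ∫ q : Z × Z, (h γ q.1 * h γ q.2) ^ 2 ∂(P.prod P)
        = (∫ z, (h γ z) ^ 2 ∂P) * ∫ z, (h γ z) ^ 2 ∂P := by
      intro γ
      have hptw : ∀ q : Z × Z, (h γ q.1 * h γ q.2) ^ 2
          = (h γ q.1) ^ 2 * (h γ q.2) ^ 2 := fun q => by ring
      simp_rw [hptw]
      rw [integral_prod_mul (f := fun z => (h γ z) ^ 2) (g := fun z => (h γ z) ^ 2)]
    have hγintm : Measurable fun γ => ∫ z, (h γ z) ^ 2 ∂P :=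
      (hhjm.pow_const 2).stronglyMeasurable.integral_prod_right'.measurable
    have hγint0 : ∀ γ, 0 ≤ ∫ z, (h γ z) ^ 2 ∂P :=
      fun γ => integral_nonneg fun z => sq_nonneg _
    have hγintb : ∀ γ, |∫ z, (h γ z) ^ 2 ∂P| ≤ 1 := by
      intro γ
      rw [abs_of_nonneg (hγint0 γ)]
      exact hh2 γ
    have hstep5 : ∫ γ, ((∫ z, (h γ z) ^ 2 ∂P) * ∫ z, (h γ z) ^ 2 ∂P) ∂p
        ≤ ∫ γ, (∫ z, (h γ z) ^ 2 ∂P) ∂p := by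
      refine integral_mono ?_ ?_ (fun γ => ?_)
      · refine my_bddInt (hγintm.mul hγintm).aestronglyMeasurable (C := 1) (fun γ => ?_)
        rw [Real.norm_eq_abs, abs_mul]
        exact mul_le_one₀ (hγintb γ) (abs_nonneg _) (hγintb γ)
      · exact my_bddInt hγintm.aestronglyMeasurable (C := 1) (fun γ => by
          rw [Real.norm_eq_abs]; exact hγintb γ)
      · nlinarith [hγint0 γ, hh2 γ]
    have hstep6 : ∫ γ, (∫ z, (h γ z) ^ 2 ∂P) ∂p = ∫ z, (∫ γ, (h γ z) ^ 2 ∂p) ∂P := by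
      refine my_swap (f := fun γ z => (h γ z) ^ 2) (hhjm.pow_const 2) (C := 4) ?_
      intro γ z
      show |(h γ z) ^ 2| ≤ 4
      rw [abs_of_nonneg (sq_nonneg _)]
      nlinarith [hhb γ z, abs_nonneg (h γ z), sq_abs (h γ z)]
    have hstep7 : ∫ z, (∫ γ, (h γ z) ^ 2 ∂p) ∂P = ∫ z, ‖Y z‖ ^ 2 ∂P :=
      integral_congr_ae (Filter.Eventually.of_forall fun z => (hKYz z).symm)
    calc ∫ Γ, (∫ q : Z × Z,
        (⟪X Γ q.1, X Γ q.2⟫ - ⟪Y q.1, Y q.2⟫) ^ 2 ∂(P.prod P)) ∂pD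
        = ∫ q : Z × Z, (∫ Γ,
          (⟪X Γ q.1, X Γ q.2⟫ - ⟪Y q.1, Y q.2⟫) ^ 2 ∂pD) ∂(P.prod P) := swap1
      _ ≤ ∫ q : Z × Z, (D:ℝ)⁻¹ * ∫ γ, (h γ q.1 * h γ q.2) ^ 2 ∂p ∂(P.prod P) := hstep1
      _ = (D:ℝ)⁻¹ * ∫ q : Z × Z, (∫ γ, (h γ q.1 * h γ q.2) ^ 2 ∂p) ∂(P.prod P) := hstep2
      _ = (D:ℝ)⁻¹ * ∫ γ, (∫ q : Z × Z, (h γ q.1 * h γ q.2) ^ 2 ∂(P.prod P)) ∂p := by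
          rw [hstep3]
      _ = (D:ℝ)⁻¹ * ∫ γ, ((∫ z, (h γ z) ^ 2 ∂P) * ∫ z, (h γ z) ^ 2 ∂P) ∂p := by
          congr 1
          exact integral_congr_ae (Filter.Eventually.of_forall fun γ => hstep4 γ)
      _ ≤ (D:ℝ)⁻¹ * ∫ γ, (∫ z, (h γ z) ^ 2 ∂P) ∂p :=
          mul_le_mul_of_nonneg_left hstep5 (by positivity)
      _ = (D:ℝ)⁻¹ * ∫ z, ‖Y z‖ ^ 2 ∂P := by rw [hstep6, hstep7]
      _ = (∫ z, ‖Y z‖ ^ 2 ∂P) / D := inv_mul_eq_div _ _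
  refine ⟨hlower, ?_⟩
  calc I ≤ ‖Sig‖ + ∫ Γ, R Γ ∂pD := key2
    _ ≤ ‖Sig‖ + Real.sqrt ((∫ z, ‖Y z‖ ^ 2 ∂P) / D) := by
        refine add_le_add_right ?_ _
        exact key3.trans (Real.sqrt_le_sqrt key4)
end
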